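/- arXiv:2511.10084 — 3 statements merged into one kernel-verified Lean document; each statement's English description precedes it below -/
import Mathlib

section
/- Let k be a field with char k ∉ {2,3}, let (G,D) be a 3-transposition group with D finite, let M = M_{1/2}(k,(G,D)), and let d be a derivation of M. Let ψ: 𝔽₃³ → D be a 3³:2-subspace of (G,D). Then d(ψ(x))_{ψ(y)} = 0 for all distinct x,y ∈ 𝔽₃³. -/
noncomputable section
attribute [local instance] Classical.propDecidable

namespace Paper
/-! ### Basics on 3-transposition groups -/

/-- Conjugation `a^b = b⁻¹ a b`. -/
def conjBy {G : Type*} [Group G] (a b : G) : G := b⁻¹ * a * b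

/-- `(G, D)` is a 3-transposition group: `D` is a generating conjugacy class of
involutions such that the product of any two of its elements has order at most 3. -/
structure Is3TG (G : Type*) [Group G] (D : Set G) : Prop where
  nonempty : D.Nonempty
  conj_mem : ∀ a ∈ D, ∀ g : G, conjBy a g ∈ D
  is_conj : ∀ a ∈ D, ∀ b ∈ D, IsConj a b
  order_two : ∀ a ∈ D, orderOf a = 2
  gen : Subgroup.closure D = ⊤
  order_mul_le : ∀ a ∈ D, ∀ b ∈ D, orderOf (a * b) ≤ 3

/-- A subset `S` is closed under the (abstract) conjugation map `τ`. -/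
def SelfConj {X : Type*} (τ : X → X → X) (S : Set X) : Prop := ∀ a ∈ S, ∀ b ∈ S, τ a b ∈ S

/-- The conjugation map restricted to a self-conjugation-closed subset. -/
def setConj {X : Type*} {τ : X → X → X} {S : Set X} (h : SelfConj τ S) (a b : ↥S) : ↥S :=
  ⟨τ a.1 b.1, h a.1 a.2 b.1 b.2⟩

lemma Is3TG.selfConj {G : Type*} [Group G] {D : Set G} (hD : Is3TG G D) :
    SelfConj conjBy D := fun a ha b _ => hD.conj_mem a ha b

lemma Is3TG.selfConj_inter {G : Type*} [Group G] {D : Set G} (hD : Is3TG G D) (H : Subgroup G) :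
    SelfConj conjBy ((H : Set G) ∩ D) := by
  rintro a ⟨haH, haD⟩ b ⟨hbH, hbD⟩
  exact ⟨H.mul_mem (H.mul_mem (H.inv_mem hbH) haH) hbH, hD.conj_mem a haD b⟩
/-! ### Matsuo algebras and derivations -/

/-- The basis vector of the Matsuo algebra corresponding to a transposition. -/
def bvec (k : Type*) [Field k] {X : Type*} (a : X) : X → k := Pi.single a 1

/-- Product of two basis elements of the Matsuo algebra of an abstract conjugation
structure `τ` on `X` (two distinct elements commute iff `τ a b = a`). -/
def matsuoBasis (k : Type*) [Field k] {X : Type*} (η : k) (τ : X → X → X) (a b : X) :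
    X → k :=
  if a = b then Pi.single a 1
  else if τ a b = a then 0
  else (η / 2) • (Pi.single a 1 + Pi.single b 1 - Pi.single (τ a b) 1)

/-- The multiplication of the Matsuo algebra with parameter `η` of an abstract
conjugation structure `τ` on a finite set `X`. -/
def matsuoMul (k : Type*) [Field k] {X : Type*} [Fintype X] (η : k) (τ : X → X → X)
    (f g : X → k) : X → k :=
  ∑ a : X, ∑ b : X, (f a * g b) • matsuoBasis k η τ a b

/-- Product of two basis elements of the Matsuo algebra `M_η(k, (G, D))`. -/
def matsuoBasisD (k : Type*) [Field k] {G : Type*} [Group G] {D : Set G}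
    (h : SelfConj conjBy D) (η : k) (a b : ↥D) : ↥D → k :=
  if a = b then Pi.single a 1
  else if orderOf (a.1 * b.1) = 3 then
    (η / 2) • (Pi.single a 1 + Pi.single b 1 - Pi.single (setConj h a b) 1)
  else 0

/-- The multiplication of the Matsuo algebra `M_η(k, (G, D))` on the vector space `↥D → k`
with basis `D`. -/
def matsuoMulD (k : Type*) [Field k] {G : Type*} [Group G] {D : Set G} [Fintype ↥D]
    (h : SelfConj conjBy D) (η : k) (f g : ↥D → k) : ↥D → k :=
  ∑ a : ↥D, ∑ b : ↥D, (f a * g b) • matsuoBasisD k h η a b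

/-- A linear map `d` is a derivation of the (non-associative) algebra with
multiplication `mul`. -/
def IsDerivation (k : Type*) [Field k] {V : Type*} [AddCommGroup V] [Module k V]
    (mul : V → V → V) (d : V →ₗ[k] V) : Prop :=
  ∀ f g : V, d (mul f g) = mul (d f) g + mul f (d g)
/-! ### Irreducible simply laced root systems and the 3-transposition structure of `3ⁿ:W` -/

/-- An irreducible simply laced root system of rank `n`, realized on its root lattice
`Λ = ℤⁿ` (identified with `ℤΦ` via a base), together with a choice of positive system.
`B` is the (symmetric, positive definite) bilinear form, all roots have norm `2`, the set
of roots is finite, closed under negation and reflections, has Cartan integers in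
`{0, ±1}` for non-proportional roots, spans the lattice, and is irreducible. -/
structure SLRootSystem (n : ℕ) where
  B : (Fin n → ℤ) →ₗ[ℤ] (Fin n → ℤ) →ₗ[ℤ] ℤ
  symm : ∀ v w, B v w = B w v
  posdef : ∀ v : Fin n → ℤ, v ≠ 0 → 0 < B v v
  Φ : Finset (Fin n → ℤ)
  root_norm : ∀ α ∈ Φ, B α α = 2
  neg_mem : ∀ α ∈ Φ, -α ∈ Φ
  reflect_mem : ∀ β ∈ Φ, ∀ α ∈ Φ, α - B β α • β ∈ Φ
  cartan : ∀ α ∈ Φ, ∀ β ∈ Φ, α ≠ β → α ≠ -β → B α β = 0 ∨ B α β = 1 ∨ B α β = -1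
  span_top : Submodule.span ℤ (Φ : Set (Fin n → ℤ)) = ⊤
  irred : ∀ S : Finset (Fin n → ℤ), S ⊆ Φ →
    (∀ α ∈ S, ∀ β ∈ Φ, β ∉ S → B α β = 0) → S = ∅ ∨ S = Φ
  pos : Finset (Fin n → ℤ)
  pos_subset : pos ⊆ Φ
  pos_iff : ∀ α ∈ Φ, (α ∈ pos ↔ -α ∉ pos)
  pos_add : ∀ α ∈ pos, ∀ β ∈ pos, α + β ∈ Φ → α + β ∈ pos

namespace SLRootSystem

variable {n : ℕ}

lemma neg_reflect_mem_pos (RS : SLRootSystem n) {β α : Fin n → ℤ} (hβ : β ∈ RS.pos)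
    (hα : α ∈ RS.pos) (h : α - RS.B β α • β ∉ RS.pos) : -(α - RS.B β α • β) ∈ RS.pos := by
  have hΦ : α - RS.B β α • β ∈ RS.Φ :=
    RS.reflect_mem β (RS.pos_subset hβ) α (RS.pos_subset hα)
  by_contra h'
  exact h ((RS.pos_iff _ hΦ).mpr h')

lemma sub_mem_pos (RS : SLRootSystem n) {a b : Fin n → ℤ} (ha : a ∈ RS.pos)
    (hb : b ∈ RS.pos) (hne : a ≠ b) (hB : RS.B a b ≠ 0) (h1 : a + b ∉ RS.pos)
    (h2 : a - b ∉ RS.pos) : b - a ∈ RS.pos := by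
  have haΦ := RS.pos_subset ha
  have hbΦ := RS.pos_subset hb
  have hneg : a ≠ -b := by
    intro h
    rw [h] at ha
    exact (RS.pos_iff b hbΦ).mp hb ha
  rcases RS.cartan a haΦ b hbΦ hne hneg with h0 | hone | hmone
  · exact absurd h0 hB
  · have hsym : RS.B b a = 1 := by rw [RS.symm]; exact hone
    have hmem : a - RS.B b a • b ∈ RS.Φ := RS.reflect_mem b hbΦ a haΦ
    rw [hsym, one_smul] at hmem
    by_contra h'
    rw [← neg_sub] at h'
    exact h2 ((RS.pos_iff _ hmem).mpr h')
  · have hsym : RS.B b a = -1 := by rw [RS.symm]; exact hmone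
    have hmem : a - RS.B b a • b ∈ RS.Φ := RS.reflect_mem b hbΦ a haΦ
    rw [hsym] at hmem
    have hmem' : a + b ∈ RS.Φ := by
      have : a - (-1 : ℤ) • b = a + b := by
        rw [neg_smul, one_smul, sub_neg_eq_add]
      rwa [this] at hmem
    exact absurd (RS.pos_add a ha b hb hmem') h1

end SLRootSystem

/-- The transposition class of the 3-transposition group `3ⁿ:W`: the element
`(a, ε)` represents the transposition `(ε ᾱ, σ_α)` for `α` the positive root `a`. -/
def D0 {n : ℕ} (RS : SLRootSystem n) : Type := ↥RS.pos × ZMod 3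

instance {n : ℕ} (RS : SLRootSystem n) : Fintype (D0 RS) :=
  inferInstanceAs (Fintype (↥RS.pos × ZMod 3))

/-- Conjugation in the transposition class of `3ⁿ:W`:
`(ε₁ᾱ, σ_α)^{(ε₂β̄, σ_β)} = ((ε₁ - ε₂⟨β,α⟩) σ_β(α)‾, σ_{σ_β(α)})`, rewritten in terms of
the positive root `±σ_β(α)`. -/
def conj0 {n : ℕ} (RS : SLRootSystem n) : D0 RS → D0 RS → D0 RS := fun a b =>
  if h : (a.1.1 - RS.B b.1.1 a.1.1 • b.1.1) ∈ RS.pos then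
    (⟨a.1.1 - RS.B b.1.1 a.1.1 • b.1.1, h⟩, a.2 - ((RS.B b.1.1 a.1.1 : ℤ) : ZMod 3) * b.2)
  else
    (⟨-(a.1.1 - RS.B b.1.1 a.1.1 • b.1.1), RS.neg_reflect_mem_pos b.1.2 a.1.2 h⟩,
      -(a.2 - ((RS.B b.1.1 a.1.1 : ℤ) : ZMod 3) * b.2))

/-- The vertical lines of the Fischer space of `3ⁿ:W` are the fibres of the first
projection `D₀ → Φ⁺`. -/
def IsVertLine {n : ℕ} (RS : SLRootSystem n) (L : Set (D0 RS)) : Prop :=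
  ∃ α : ↥RS.pos, L = {p : D0 RS | p.1 = α}
/-! ### The positive system of type `D₄` and distinguished subspaces of Fischer spaces -/

/-- The positive roots of type `D₄`: `eᵢ - eⱼ` and `eᵢ + eⱼ` for `i < j`. -/
def D4Pos : Set (Fin 4 → ℤ) :=
  {v | ∃ i j : Fin 4, i < j ∧
    (v = Pi.single i 1 - Pi.single j 1 ∨ v = Pi.single i 1 + Pi.single j 1)}

/-- The standard inner product on `ℤ⁴`. -/
def ip4 (v w : Fin 4 → ℤ) : ℤ := ∑ i, v i * w i

/-- The reflection `σ_χ(χ') = χ' - ⟨χ, χ'⟩ χ` (for `χ` of norm 2). -/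
def refl4 (χ χ' : Fin 4 → ℤ) : Fin 4 → ℤ := χ' - ip4 χ χ' • χ

/-- `ψ` is a `D₄`-subspace of the 3-transposition group `(G, D)`. -/
def IsD4Subspace {G : Type*} [Group G] (D : Set G) (ψ : ↥D4Pos → ↥D) : Prop :=
  Function.Injective ψ ∧
  (∀ χ χ' : ↥D4Pos, χ ≠ χ' → (Commute (ψ χ : G) (ψ χ' : G) ↔ ip4 χ.1 χ'.1 = 0)) ∧
  (∀ χ χ' : ↥D4Pos, ip4 χ.1 χ'.1 ≠ 0 → ∀ χ'' : ↥D4Pos,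
    (χ''.1 = refl4 χ'.1 χ.1 ∨ χ''.1 = -refl4 χ'.1 χ.1) →
      conjBy (ψ χ : G) (ψ χ' : G) = (ψ χ'' : G))

/-- `ψ` is a `3³:2`-subspace of the 3-transposition group `(G, D)`. -/
def Is3cube2Subspace {G : Type*} [Group G] (D : Set G) (ψ : (Fin 3 → ZMod 3) → ↥D) : Prop :=
  Function.Injective ψ ∧
  ∀ x y : Fin 3 → ZMod 3, (ψ (-x - y) : G) = conjBy (ψ x : G) (ψ y : G)

/-- `ψ` is a `3³:S₄`-subspace of the 3-transposition group `(G, D)`; here the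
transposition class of `3³:S₄` is modelled as `D0 RS` for `RS` an irreducible simply
laced root system of rank 3 (necessarily of type `A₃`). -/
def Is33S4Subspace {G : Type*} [Group G] (D : Set G) (RS : SLRootSystem 3)
    (ψ : D0 RS → ↥D) : Prop :=
  Function.Injective ψ ∧
  ∀ x y : D0 RS, (ψ (conj0 RS x y) : G) = conjBy (ψ x : G) (ψ y : G)

/-! ### Auxiliary lemmas for Statement 4 -/

section Aux4

lemma mulX4 {G : Type*} [Group G] {a : G} (ha : a * a = 1) (x : G) :
    a * (a * x) = x := by
  rw [← mul_assoc, ha, one_mul]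

lemma braid34 {G : Type*} [Group G] {a b : G} (ha : a * a = 1) (hb : b * b = 1)
    (h3 : (a * b) ^ 3 = 1) : b * (a * b) = a * (b * a) := by
  have E : a * (b * (a * (b * (a * b)))) = 1 := by
    have : (a*b)^3 = a * (b * (a * (b * (a * b)))) := by
      simp only [pow_succ, pow_zero, one_mul, mul_assoc]
    rw [← this, h3]
  have E1 : b * (a * (b * (a * b))) = a := by
    have := congrArg (fun z => a * z) E
    simpa only [mulX4 ha, mul_one] using this
  have E2 : b * (a * (b * a)) = a * b := by
    have := congrArg (fun z => z * b) E1
    simpa only [mul_assoc, hb, mul_one] using this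
  have := congrArg (fun z => z * a) E2
  simpa only [mul_assoc, ha, mul_one] using this

lemma apapa4 {G : Type*} [Group G] {a p : G} (hp : p * p = 1)
    (h3 : (a * p) ^ 3 = 1) : a * (p * (a * (p * a))) = p := by
  have E : a * (p * (a * (p * (a * p)))) = 1 := by
    have : (a*p)^3 = a * (p * (a * (p * (a * p)))) := by
      simp only [pow_succ, pow_zero, one_mul, mul_assoc]
    rw [← this, h3]
  have := congrArg (fun z => z * p) E
  simpa only [mul_assoc, hp, mul_one, one_mul] using this

variable {k : Type*} [Field k] {G : Type*} [Group G] {D : Set G} [Fintype ↥D]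
  {h : SelfConj conjBy D}

/-- Order-3 facts packaged. -/
structure LineData (h : SelfConj conjBy D) (a p : ↥D) : Prop where
  hpa : p ≠ a
  hqp : setConj h p a ≠ p
  hqa : setConj h p a ≠ a
  hqval : ((setConj h p a : ↥D) : G) = a * (p * a)
  horder_pa : orderOf ((p : G) * (a : G)) = 3
  horder_aq : orderOf ((a : G) * ((setConj h p a : ↥D) : G)) = 3
  horder_qa : orderOf (((setConj h p a : ↥D) : G) * (a : G)) = 3
  hconj_aq : setConj h a (setConj h p a) = p
  hsolve : ∀ b' : ↥D, (b' : G) * (b' : G) = 1 → orderOf ((a : G) * (b' : G)) = 3 →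
      setConj h a b' = p → b' = setConj h p a
  hsolve' : ∀ a' : ↥D, setConj h a' a = p ↔ a' = setConj h p a

lemma lineData (a p : ↥D) (ha : (a : G) * (a : G) = 1) (hp : (p : G) * (p : G) = 1)
    (h3 : orderOf ((a : G) * (p : G)) = 3) : LineData h a p := by
  have ha' : (a : G)⁻¹ = a := inv_eq_of_mul_eq_one_right ha
  have hp' : (p : G)⁻¹ = p := inv_eq_of_mul_eq_one_right hp
  have hpow : ((a : G) * p) ^ 3 = 1 := by
    rw [← h3]; exact pow_orderOf_eq_one _
  have hpa : p ≠ a := by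
    intro hh
    rw [hh, ha] at h3
    simp at h3
  have hqval : ((setConj h p a : ↥D) : G) = a * (p * a) := by
    show conjBy (p : G) a = _
    unfold conjBy
    rw [ha', mul_assoc]
  have haq : (a : G) * (setConj h p a : ↥D) = p * a := by
    rw [hqval, mulX4 ha]
  have hqa' : ((setConj h p a : ↥D) : G) * a = a * p := by
    rw [hqval, mul_assoc, mul_assoc, ha, mul_one]
  have horder_pa : orderOf ((p : G) * (a : G)) = 3 := by
    have : ((a : G) * p)⁻¹ = p * a := by rw [mul_inv_rev, ha', hp']
    rw [← this, orderOf_inv, h3]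
  have hqp : setConj h p a ≠ p := by
    intro hh
    have : (a : G) * ((setConj h p a : ↥D) : G) = a * p := by rw [hh]
    rw [haq] at this
    have hcomm : ((a:G) * p) ^ 2 = 1 := by
      rw [pow_two]
      nth_rewrite 1 [← this]
      rw [mul_assoc, mulX4 ha, hp]
    have := orderOf_dvd_of_pow_eq_one hcomm
    rw [h3] at this
    omega
  have hqa : setConj h p a ≠ a := by
    intro hh
    have : (a : G) * ((setConj h p a : ↥D) : G) = a * a := by rw [hh]
    rw [haq, ha] at this
    have : orderOf ((p : G) * (a : G)) = 1 := by rw [this]; exact orderOf_one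
    rw [horder_pa] at this
    omega
  have horder_aq : orderOf ((a : G) * ((setConj h p a : ↥D) : G)) = 3 := by
    rw [haq, horder_pa]
  have horder_qa : orderOf (((setConj h p a : ↥D) : G) * (a : G)) = 3 := by
    rw [hqa', h3]
  have hconj_aq : setConj h a (setConj h p a) = p := by
    apply Subtype.ext
    show conjBy (a : G) ((setConj h p a : ↥D) : G) = (p : G)
    rw [conjBy]
    rw [hqval]
    have hinvq : ((a : G) * (p * a))⁻¹ = a * (p * a) := by
      rw [mul_inv_rev, mul_inv_rev, ha', hp', mul_assoc]
    rw [hinvq]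
    calc (a : G) * (p * a) * a * (a * (p * a))
        = a * (p * (a * (a * (a * (p * a))))) := by simp only [mul_assoc]
      _ = a * (p * (a * (p * a))) := by rw [mulX4 ha]
      _ = p := apapa4 hp hpow
  constructor
  · exact hpa
  · exact hqp
  · exact hqa
  · exact hqval
  · exact horder_pa
  · exact horder_aq
  · exact horder_qa
  · exact hconj_aq
  · -- hsolve
    intro b' hb' h3b hcb
    have hbraid : (b' : G) * (a * b') = a * (b' * a) := by
      apply braid34 ha hb'
      rw [← h3b]; exact pow_orderOf_eq_one _
    have hb'inv : (b' : G)⁻¹ = b' := inv_eq_of_mul_eq_one_right hb'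
    have hval : conjBy (a : G) (b' : G) = (p : G) := congrArg Subtype.val hcb
    unfold conjBy at hval
    rw [hb'inv] at hval
    apply Subtype.ext
    rw [hqval]
    have this1 : (b' : G) * (a * b') = p := by rw [← mul_assoc]; exact hval
    rw [hbraid] at this1
    calc (b' : G) = a * (a * ((b':G) * (a * a))) := by rw [ha, mul_one, mulX4 ha]
      _ = a * ((a * ((b':G) * a)) * a) := by simp only [mul_assoc]
      _ = a * ((p : G) * a) := by rw [this1]
  · -- hsolve'
    intro a'
    constructor
    · intro hh
      have hval : conjBy (a' : G) (a : G) = (p : G) := congrArg Subtype.val hh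
      unfold conjBy at hval
      rw [ha'] at hval
      apply Subtype.ext
      rw [hqval]
      calc (a' : G) = a * (a * ((a' : G) * (a * a))) := by rw [ha, mul_one, mulX4 ha]
        _ = a * (((a : G) * (a' : G) * (a : G)) * a) := by simp only [mul_assoc]
        _ = a * ((p : G) * a) := by rw [hval]
    · intro hh
      rw [hh]
      apply Subtype.ext
      show conjBy ((setConj h p a : ↥D) : G) (a : G) = (p : G)
      rw [conjBy]
      rw [ha', hqval]
      calc (a:G) * (a * (p * a)) * a = (a:G) * (a * (p * (a * a))) := by
            simp only [mul_assoc]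
        _ = (p : G) := by rw [ha, mul_one, mulX4 ha]

end Aux4

section Aux5

variable {k : Type*} [Field k] {G : Type*} [Group G] {D : Set G} [Fintype ↥D]
  {h : SelfConj conjBy D}

lemma single_apply4 {X : Type*} {inst : DecidableEq X} (a b : X) (v : k) :
    (@Pi.single X (fun _ => k) _ inst a v) b = if b = a then v else 0 := by
  by_cases hba : b = a
  · subst hba
    rw [if_pos rfl]
    exact @Pi.single_eq_same X (fun _ => k) _ inst b v
  · rw [if_neg hba]
    exact @Pi.single_eq_of_ne X (fun _ => k) _ inst a b hba v

lemma basis_coeff_left (η : k) {a p : ↥D} (L : LineData h a p)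
    (hinv : ∀ e : ↥D, (e : G) * (e : G) = 1)
    (h3 : orderOf ((a : G) * (p : G)) = 3) (b' : ↥D) :
    matsuoBasisD k h η a b' p
      = η / 2 * ((if b' = p then 1 else 0) - (if b' = setConj h p a then 1 else 0)) := by
  by_cases hab : a = b'
  · subst hab
    have h1 : ¬ (a = p) := fun hh => L.hpa hh.symm
    have h2 : ¬ (a = setConj h p a) := fun hh => L.hqa hh.symm
    rw [matsuoBasisD, if_pos rfl]
    simp [single_apply4, L.hpa, h1, h2]
  · rw [matsuoBasisD, if_neg hab]
    by_cases h3b : orderOf ((a : G) * (b' : G)) = 3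
    · rw [if_pos h3b]
      have hiff : (p = setConj h a b') ↔ (b' = setConj h p a) := by
        constructor
        · intro hh; exact L.hsolve b' (hinv b') h3b hh.symm
        · intro hh; rw [hh, L.hconj_aq]
      simp only [Pi.smul_apply, Pi.add_apply, Pi.sub_apply, smul_eq_mul, single_apply4,
        if_neg (show ¬ (p = a) from L.hpa),
        show ((p = b') = (b' = p)) from propext eq_comm,
        show ((p = setConj h a b') = (b' = setConj h p a)) from propext hiff]
      ring
    · rw [if_neg h3b]
      have hbp : ¬ (b' = p) := fun hh => h3b (by rw [hh]; exact h3)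
      have hbq : ¬ (b' = setConj h p a) := fun hh => h3b (by rw [hh]; exact L.horder_aq)
      simp [hbp, hbq]

lemma basis_coeff_right (η : k) {a p : ↥D} (L : LineData h a p)
    (h3 : orderOf ((a : G) * (p : G)) = 3) (a' : ↥D) :
    matsuoBasisD k h η a' a p
      = η / 2 * ((if a' = p then 1 else 0) - (if a' = setConj h p a then 1 else 0)) := by
  by_cases haa : a' = a
  · rw [haa]
    have h1 : ¬ (a = p) := fun hh => L.hpa hh.symm
    have h2 : ¬ (a = setConj h p a) := fun hh => L.hqa hh.symm
    rw [matsuoBasisD, if_pos rfl]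
    simp [single_apply4, L.hpa, h1, h2]
  · rw [matsuoBasisD, if_neg haa]
    by_cases h3b : orderOf ((a' : G) * (a : G)) = 3
    · rw [if_pos h3b]
      have hiff : (p = setConj h a' a) ↔ (a' = setConj h p a) := by
        constructor
        · intro hh; exact (L.hsolve' a').mp hh.symm
        · intro hh; exact ((L.hsolve' a').mpr hh).symm
      simp only [Pi.smul_apply, Pi.add_apply, Pi.sub_apply, smul_eq_mul, single_apply4,
        if_neg (show ¬ (p = a) from L.hpa),
        show ((p = a') = (a' = p)) from propext eq_comm,
        show ((p = setConj h a' a) = (a' = setConj h p a)) from propext hiff]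
      ring
    · rw [if_neg h3b]
      have hbp : ¬ (a' = p) := fun hh => h3b (by rw [hh]; exact L.horder_pa)
      have hbq : ¬ (a' = setConj h p a) := fun hh => h3b (by rw [hh]; exact L.horder_qa)
      simp [hbp, hbq]

lemma mulD_bvec_right (η : k) (a : ↥D) (g : ↥D → k) (p : ↥D) :
    matsuoMulD k h η g (bvec k a) p = ∑ a' : ↥D, g a' * matsuoBasisD k h η a' a p := by
  unfold matsuoMulD bvec
  rw [Finset.sum_apply]
  apply Finset.sum_congr rfl
  intro a' _
  rw [Finset.sum_apply]
  simp only [Pi.smul_apply, smul_eq_mul, single_apply4]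
  rw [Finset.sum_eq_single a]
  · rw [if_pos rfl, mul_one]
  · intro b _ hb
    rw [if_neg hb, mul_zero, zero_mul]
  · simp

lemma mulD_bvec_left (η : k) (a : ↥D) (g : ↥D → k) (p : ↥D) :
    matsuoMulD k h η (bvec k a) g p = ∑ b' : ↥D, g b' * matsuoBasisD k h η a b' p := by
  unfold matsuoMulD bvec
  rw [Finset.sum_apply]
  simp only [Finset.sum_apply, Pi.smul_apply, smul_eq_mul, single_apply4]
  rw [Finset.sum_eq_single a]
  · apply Finset.sum_congr rfl
    intro b' _
    rw [if_pos rfl, one_mul, mul_comm]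
  · intro a' _ ha'
    apply Finset.sum_eq_zero
    intro b' _
    rw [if_neg ha', zero_mul, zero_mul]
  · simp

lemma sum_delta4 (c : ↥D) (g : ↥D → k) :
    ∑ e : ↥D, g e * (if e = c then (1:k) else 0) = g c := by
  rw [Finset.sum_eq_single c]
  · simp
  · intro b _ hb; simp [hb]
  · simp

lemma coeff_right (η : k) {a p : ↥D} (L : LineData h a p)
    (h3 : orderOf ((a : G) * (p : G)) = 3) (g : ↥D → k) :
    matsuoMulD k h η g (bvec k a) p = η / 2 * (g p - g (setConj h p a)) := by
  rw [mulD_bvec_right]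
  calc ∑ a' : ↥D, g a' * matsuoBasisD k h η a' a p
      = ∑ a' : ↥D, (η/2 * (g a' * (if a' = p then 1 else 0))
          - η/2 * (g a' * (if a' = setConj h p a then 1 else 0))) := by
        apply Finset.sum_congr rfl; intro a' _
        rw [basis_coeff_right η L h3 a']; ring
    _ = η / 2 * (g p - g (setConj h p a)) := by
        rw [Finset.sum_sub_distrib, ← Finset.mul_sum, ← Finset.mul_sum,
          sum_delta4, sum_delta4]; ring

lemma coeff_left (η : k) {a p : ↥D} (L : LineData h a p)
    (hinv : ∀ e : ↥D, (e : G) * (e : G) = 1)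
    (h3 : orderOf ((a : G) * (p : G)) = 3) (g : ↥D → k) :
    matsuoMulD k h η (bvec k a) g p = η / 2 * (g p - g (setConj h p a)) := by
  rw [mulD_bvec_left]
  calc ∑ b' : ↥D, g b' * matsuoBasisD k h η a b' p
      = ∑ b' : ↥D, (η/2 * (g b' * (if b' = p then 1 else 0))
          - η/2 * (g b' * (if b' = setConj h p a then 1 else 0))) := by
        apply Finset.sum_congr rfl; intro b' _
        rw [basis_coeff_left η L hinv h3 b']; ring
    _ = η / 2 * (g p - g (setConj h p a)) := by
        rw [Finset.sum_sub_distrib, ← Finset.mul_sum, ← Finset.mul_sum,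
          sum_delta4, sum_delta4]; ring

lemma mulD_bvec_bvec (η : k) (a b : ↥D) :
    matsuoMulD k h η (bvec k a) (bvec k b) = matsuoBasisD k h η a b := by
  funext p
  rw [mulD_bvec_left]
  rw [Finset.sum_eq_single b]
  · unfold bvec; rw [single_apply4, if_pos rfl, one_mul]
  · intro b' _ hb'; unfold bvec; rw [single_apply4, if_neg hb', zero_mul]
  · simp

lemma basis_self (η : k) (a : ↥D) : matsuoBasisD k h η a a = bvec k a := by
  funext p
  rw [matsuoBasisD, if_pos rfl]
  unfold bvec
  rw [single_apply4, single_apply4]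
  split_ifs <;> rfl

lemma basis_line (η : k) {a b : ↥D} (hne : a ≠ b)
    (h3 : orderOf ((a : G) * (b : G)) = 3) :
    matsuoBasisD k h η a b
      = (η/2) • (bvec k a + bvec k b - bvec k (setConj h a b)) := by
  funext p
  rw [matsuoBasisD, if_neg hne, if_pos h3]
  unfold bvec
  simp only [Pi.smul_apply, Pi.add_apply, Pi.sub_apply, smul_eq_mul, single_apply4]
  split_ifs <;> rfl

end Aux5

/-- If `char k ∉ {2,3}` and two collinear transpositions lie in a
`3³:2`-subspace, then the corresponding coefficient of a derivation vanishes. -/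
theorem statement4 (k : Type*) [Field k] (hk2 : (2 : k) ≠ 0) (hk3 : (3 : k) ≠ 0)
    {G : Type*} [Group G] {D : Set G} [Fintype ↥D] (hD : Is3TG G D)
    (d : (↥D → k) →ₗ[k] (↥D → k))
    (hd : IsDerivation k (matsuoMulD k hD.selfConj ((1 : k) / 2)) d)
    (ψ : (Fin 3 → ZMod 3) → ↥D) (hψ : Is3cube2Subspace D ψ) :
    ∀ x y : Fin 3 → ZMod 3, x ≠ y → d (bvec k (ψ x)) (ψ y) = 0 := by
  have hinv : ∀ e : ↥D, (e : G) * (e : G) = 1 := by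
    intro e
    have h2 := hD.order_two e e.2
    have hp := pow_orderOf_eq_one (e : G)
    rw [h2, pow_two] at hp
    exact hp
  have hC4 : ((1:k)/2/2) * 4 = 1 := by
    rw [div_div, one_div, show (4:k) = 2*2 by norm_num,
      inv_mul_cancel₀ (mul_ne_zero hk2 hk2)]
  -- order 3 for distinct cube points
  have horder : ∀ u v : Fin 3 → ZMod 3, u ≠ v →
      orderOf ((ψ u : G) * (ψ v : G)) = 3 := by
    intro u v huv
    have ha := hinv (ψ u); have hb := hinv (ψ v)
    have ha' : ((ψ u : G))⁻¹ = (ψ u : G) := inv_eq_of_mul_eq_one_right ha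
    have hb' : ((ψ v : G))⁻¹ = (ψ v : G) := inv_eq_of_mul_eq_one_right hb
    have e1 := hψ.2 u v
    have e2 := hψ.2 v u
    unfold conjBy at e1 e2
    rw [hb'] at e1
    rw [ha'] at e2
    rw [show -v - u = -u - v by abel] at e2
    have hbab : (ψ v : G) * ((ψ u : G) * (ψ v : G))
        = (ψ u : G) * ((ψ v : G) * (ψ u : G)) := by
      have := e1.symm.trans e2
      simpa only [mul_assoc] using this
    have h3cube : ((ψ u : G) * (ψ v : G)) ^ 3 = 1 := by
      have E : ((ψ u : G) * (ψ v : G)) ^ 3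
          = (ψ u : G) * ((ψ v : G) * ((ψ u : G) * ((ψ v : G) * ((ψ u : G) * (ψ v : G))))) := by
        simp only [pow_succ, pow_zero, one_mul, mul_assoc]
      rw [E, hbab, mulX4 ha, mulX4 hb]
      exact ha
    have hne1 : (ψ u : G) * (ψ v : G) ≠ 1 := by
      intro hh
      have hval : ((ψ v : ↥D) : G) = ((ψ u : ↥D) : G) := by
        have := inv_eq_of_mul_eq_one_right hh
        rw [ha'] at this
        exact this.symm
      exact huv (hψ.1 (Subtype.ext hval)).symm
    have hdvd := orderOf_dvd_of_pow_eq_one h3cube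
    rcases (Nat.prime_three).eq_one_or_self_of_dvd _ hdvd with h1 | h1
    · exact absurd (orderOf_eq_one_iff.mp h1) hne1
    · exact h1
  have hsc : ∀ u v : Fin 3 → ZMod 3,
      setConj hD.selfConj (ψ u) (ψ v) = ψ (-u - v) :=
    fun u v => Subtype.ext (hψ.2 u v).symm
  have hLD : ∀ u v : Fin 3 → ZMod 3, u ≠ v →
      LineData hD.selfConj (ψ u) (ψ v) :=
    fun u v huv => lineData (ψ u) (ψ v) (hinv _) (hinv _) (horder u v huv)
  -- skew relation
  have S : ∀ a b : Fin 3 → ZMod 3, a ≠ b →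
      d (bvec k (ψ a)) (ψ b) + d (bvec k (ψ a)) (ψ (-a - b)) = 0 := by
    intro a b hab
    have L := hLD a b hab
    have hde := hd (bvec k (ψ a)) (bvec k (ψ a))
    rw [mulD_bvec_bvec, basis_self] at hde
    have hev := congrFun hde (ψ b)
    rw [Pi.add_apply,
      coeff_right ((1:k)/2) L (horder a b hab) (d (bvec k (ψ a))),
      coeff_left ((1:k)/2) L hinv (horder a b hab) (d (bvec k (ψ a))),
      hsc b a, show -b - a = -a - b by abel] at hev
    linear_combination 2 * hev
      + (d (bvec k (ψ a)) (ψ b) - d (bvec k (ψ a)) (ψ (-a - b))) * hC4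
  -- the main line relation
  have star : ∀ a b w : Fin 3 → ZMod 3, a ≠ b → w ≠ a → w ≠ b →
      d (bvec k (ψ (-a - b))) (ψ w)
        = d (bvec k (ψ a)) (ψ (-b - w)) + d (bvec k (ψ b)) (ψ (-a - w)) := by
    intro a b w hab hwa hwb
    have hde := hd (bvec k (ψ a)) (bvec k (ψ b))
    rw [mulD_bvec_bvec,
      basis_line ((1:k)/2) (fun hh => hab (hψ.1 hh)) (horder a b hab), hsc a b,
      map_smul, map_sub, map_add] at hde
    have hev := congrFun hde (ψ w)
    rw [Pi.add_apply,
      coeff_right ((1:k)/2) (hLD b w (Ne.symm hwb)) (horder b w (Ne.symm hwb))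
        (d (bvec k (ψ a))),
      coeff_left ((1:k)/2) (hLD a w (Ne.symm hwa)) hinv (horder a w (Ne.symm hwa))
        (d (bvec k (ψ b))),
      hsc w b, hsc w a, show -w - b = -b - w by abel,
      show -w - a = -a - w by abel] at hev
    simp only [Pi.smul_apply, Pi.sub_apply, Pi.add_apply, smul_eq_mul] at hev
    linear_combination (-4 : k) * hev
      - (d (bvec k (ψ (-a - b))) (ψ w) - d (bvec k (ψ a)) (ψ (-b - w))
          - d (bvec k (ψ b)) (ψ (-a - w))) * hC4
  -- now the combinatorial endgame
  intro x y hxy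
  set u : Fin 3 → ZMod 3 := y - x with hu
  have hu0 : u ≠ 0 := by
    intro hh
    exact hxy (sub_eq_zero.mp (hu ▸ hh)).symm
  obtain ⟨i, hui⟩ : ∃ i, u i ≠ 0 := by
    by_contra hc
    push_neg at hc
    exact hu0 (funext hc)
  -- the H function
  set H : (Fin 3 → ZMod 3) → k := fun t => d (bvec k (ψ t)) (ψ (t + u)) with hH
  -- star in H form
  have SH : ∀ s t : Fin 3 → ZMod 3, s ≠ t → t - s ≠ u → t - s ≠ -u →
      H s + H t + H (-s - t) = 0 := by
    intro s t hst h1 h2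
    have Z1 : ∀ a b c : ZMod 3, a - b - c = b → c - b = a := by decide
    have Z2 : ∀ a b c : ZMod 3, a - b - c = c → c - b = -a := by decide
    have hz1 : u - s - t ≠ s := by
      intro hh
      apply h1
      funext m
      simp only [Pi.sub_apply]
      exact Z1 (u m) (s m) (t m)
        (by have := congrFun hh m; simpa only [Pi.sub_apply] using this)
    have hz2 : u - s - t ≠ t := by
      intro hh
      apply h2
      funext m
      simp only [Pi.sub_apply, Pi.neg_apply]
      exact Z2 (u m) (s m) (t m)
        (by have := congrFun hh m; simpa only [Pi.sub_apply] using this)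
    have hstar := star s t (u - s - t) hst hz1 hz2
    rw [show -t - (u - s - t) = s - u by abel,
      show -s - (u - s - t) = t - u by abel,
      show u - s - t = -s - t + u by abel] at hstar
    have hsne : s ≠ s + u := by
      intro hh
      apply hu0
      funext m
      have := congrFun hh m
      simp only [Pi.add_apply, Pi.zero_apply] at this ⊢
      exact (by decide : ∀ a b : ZMod 3, a = a + b → b = 0) (s m) (u m) this
    have htne : t ≠ t + u := by
      intro hh
      apply hu0
      funext m
      have := congrFun hh m
      simp only [Pi.add_apply, Pi.zero_apply] at this ⊢
      exact (by decide : ∀ a b : ZMod 3, a = a + b → b = 0) (t m) (u m) this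
    have hS1 := S s (s + u) hsne
    have hS2 := S t (t + u) htne
    rw [show -s - (s + u) = s - u from by
      funext m
      simp only [Pi.sub_apply, Pi.neg_apply, Pi.add_apply]
      exact (by decide : ∀ a b : ZMod 3, -a - (a + b) = a - b) (s m) (u m)] at hS1
    rw [show -t - (t + u) = t - u from by
      funext m
      simp only [Pi.sub_apply, Pi.neg_apply, Pi.add_apply]
      exact (by decide : ∀ a b : ZMod 3, -a - (a + b) = a - b) (t m) (u m)] at hS2
    simp only [hH]
    linear_combination hstar + hS1 + hS2
  -- basis directions
  set d1 : Fin 3 → ZMod 3 := fun m => if m = i + 1 then 1 else 0 with hd1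
  set d2 : Fin 3 → ZMod 3 := fun m => if m = i + 2 then 1 else 0 with hd2
  have hi1 : ¬ (i = i + 1) := (by decide : ∀ m : Fin 3, ¬ (m = m + 1)) i
  have hi2 : ¬ (i = i + 2) := (by decide : ∀ m : Fin 3, ¬ (m = m + 2)) i
  have h12 : ¬ ((i + 1 : Fin 3) = i + 2) :=
    (by decide : ∀ m : Fin 3, ¬ (m + 1 = m + 2)) i
  have h21 : ¬ ((i + 2 : Fin 3) = i + 1) :=
    (by decide : ∀ m : Fin 3, ¬ (m + 2 = m + 1)) i
  have hd1i : d1 i = 0 := by simp [hd1, hi1]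
  have hd2i : d2 i = 0 := by simp [hd2, hi2]
  have hd1j : d1 (i + 1) = 1 := by simp [hd1]
  have hd2j : d2 (i + 1) = 0 := by simp [hd2, h12]
  have hd1l : d1 (i + 2) = 0 := by simp [hd1, h21]
  have hd2l : d2 (i + 2) = 1 := by simp [hd2]
  have hA2 := SH (x + d2) (x + d2 + d2)
    (by
      intro hh
      have hc := congrFun hh (i + 2)
      simp only [Pi.add_apply, hd1l, hd2l] at hc
      revert hc
      generalize x (i + 2) = c
      revert c
      decide)
    (by
      intro hh
      apply hui
      have hc := congrFun hh i
      simp only [Pi.sub_apply, Pi.add_apply, hd1i, hd2i] at hc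
      rw [← hc]
      generalize x i = c
      revert c
      decide)
    (by
      intro hh
      apply hui
      have hc := congrFun hh i
      simp only [Pi.sub_apply, Pi.neg_apply, Pi.add_apply, hd1i, hd2i] at hc
      apply neg_eq_zero.mp
      rw [← hc]
      generalize x i = c
      revert c
      decide)
  rw [show -(x + d2) - (x + d2 + d2) = x from by
    funext m
    simp only [Pi.neg_apply, Pi.sub_apply, Pi.add_apply]
    exact (by decide : ∀ a b : ZMod 3, -(a + b) - (a + b + b) = a) (x m) (d2 m)] at hA2
  have hA3 := SH (x + d1 + d2) (x + d1 + d1 + d2 + d2)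
    (by
      intro hh
      have hc := congrFun hh (i + 1)
      simp only [Pi.add_apply, hd1j, hd2j] at hc
      revert hc
      generalize x (i + 1) = c
      revert c
      decide)
    (by
      intro hh
      apply hui
      have hc := congrFun hh i
      simp only [Pi.sub_apply, Pi.add_apply, hd1i, hd2i] at hc
      rw [← hc]
      generalize x i = c
      revert c
      decide)
    (by
      intro hh
      apply hui
      have hc := congrFun hh i
      simp only [Pi.sub_apply, Pi.neg_apply, Pi.add_apply, hd1i, hd2i] at hc
      apply neg_eq_zero.mp
      rw [← hc]
      generalize x i = c
      revert c
      decide)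
  rw [show -(x + d1 + d2) - (x + d1 + d1 + d2 + d2) = x from by
    funext m
    simp only [Pi.neg_apply, Pi.sub_apply, Pi.add_apply]
    exact (by decide : ∀ a b c : ZMod 3, -(a + b + c) - (a + b + b + c + c) = a) (x m) (d1 m) (d2 m)] at hA3
  have hA4 := SH (x + d1 + d2 + d2) (x + d1 + d1 + d2)
    (by
      intro hh
      have hc := congrFun hh (i + 1)
      simp only [Pi.add_apply, hd1j, hd2j] at hc
      revert hc
      generalize x (i + 1) = c
      revert c
      decide)
    (by
      intro hh
      apply hui
      have hc := congrFun hh i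
      simp only [Pi.sub_apply, Pi.add_apply, hd1i, hd2i] at hc
      rw [← hc]
      generalize x i = c
      revert c
      decide)
    (by
      intro hh
      apply hui
      have hc := congrFun hh i
      simp only [Pi.sub_apply, Pi.neg_apply, Pi.add_apply, hd1i, hd2i] at hc
      apply neg_eq_zero.mp
      rw [← hc]
      generalize x i = c
      revert c
      decide)
  rw [show -(x + d1 + d2 + d2) - (x + d1 + d1 + d2) = x from by
    funext m
    simp only [Pi.neg_apply, Pi.sub_apply, Pi.add_apply]
    exact (by decide : ∀ a b c : ZMod 3, -(a + b + c + c) - (a + b + b + c) = a) (x m) (d1 m) (d2 m)] at hA4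
  have hB2 := SH (x + d2) (x + d1 + d2)
    (by
      intro hh
      have hc := congrFun hh (i + 1)
      simp only [Pi.add_apply, hd1j, hd2j] at hc
      revert hc
      generalize x (i + 1) = c
      revert c
      decide)
    (by
      intro hh
      apply hui
      have hc := congrFun hh i
      simp only [Pi.sub_apply, Pi.add_apply, hd1i, hd2i] at hc
      rw [← hc]
      generalize x i = c
      revert c
      decide)
    (by
      intro hh
      apply hui
      have hc := congrFun hh i
      simp only [Pi.sub_apply, Pi.neg_apply, Pi.add_apply, hd1i, hd2i] at hc
      apply neg_eq_zero.mp
      rw [← hc]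
      generalize x i = c
      revert c
      decide)
  rw [show -(x + d2) - (x + d1 + d2) = x + d1 + d1 + d2 from by
    funext m
    simp only [Pi.neg_apply, Pi.sub_apply, Pi.add_apply]
    exact (by decide : ∀ a b c : ZMod 3, -(a + c) - (a + b + c) = a + b + b + c) (x m) (d1 m) (d2 m)] at hB2
  have hB3 := SH (x + d2 + d2) (x + d1 + d2 + d2)
    (by
      intro hh
      have hc := congrFun hh (i + 1)
      simp only [Pi.add_apply, hd1j, hd2j] at hc
      revert hc
      generalize x (i + 1) = c
      revert c
      decide)
    (by
      intro hh
      apply hui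
      have hc := congrFun hh i
      simp only [Pi.sub_apply, Pi.add_apply, hd1i, hd2i] at hc
      rw [← hc]
      generalize x i = c
      revert c
      decide)
    (by
      intro hh
      apply hui
      have hc := congrFun hh i
      simp only [Pi.sub_apply, Pi.neg_apply, Pi.add_apply, hd1i, hd2i] at hc
      apply neg_eq_zero.mp
      rw [← hc]
      generalize x i = c
      revert c
      decide)
  rw [show -(x + d2 + d2) - (x + d1 + d2 + d2) = x + d1 + d1 + d2 + d2 from by
    funext m
    simp only [Pi.neg_apply, Pi.sub_apply, Pi.add_apply]
    exact (by decide : ∀ a b c : ZMod 3, -(a + c + c) - (a + b + c + c) = a + b + b + c + c) (x m) (d1 m) (d2 m)] at hB3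
  have h3H : (3 : k) * H x = 0 := by
    linear_combination hA2 + hA3 + hA4 - hB2 - hB3
  have hHx : H x = 0 := by
    rcases mul_eq_zero.mp h3H with h | h
    · exact absurd h hk3
    · exact h
  have hyx : y = x + u := by rw [hu]; abel
  rw [hyx]
  simpa only [hH] using hHx
end Paper
end
end

section
/- Let (G,D) be the 3-transposition group 3³:S₄, i.e., 3ⁿ:W for Φ the root system of type A₃ (so n = 3 and W ≅ S₄). The conjugation action of G on the set of lines of its Fischer space (the 3-element sets {a,b,a^b} with a,b ∈ D, a ⊥̸ b) has exactly two orbits: the set of vertical lines and the set of horizontal lines. -/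
noncomputable section
attribute [local instance] Classical.propDecidable

namespace Paper
/-! ### Lines, `D`-subgroups, central type, planes and near-solid lines -/

/-- A line of the Fischer space of `(G, D)`. -/
def IsLine {G : Type*} [Group G] (D : Set G) (L : Set G) : Prop :=
  ∃ a ∈ D, ∃ b ∈ D, orderOf (a * b) = 3 ∧ L = {a, b, conjBy a b}

/-- A line of the Fischer space attached to an abstract conjugation structure `τ`. -/
def IsTLine {X : Type*} (τ : X → X → X) (L : Set X) : Prop :=
  ∃ a b : X, a ≠ b ∧ τ a b ≠ a ∧ L = {a, b, τ a b}

/-- `H` is generated by at most `m` elements of `H ∩ D`. -/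
def GenByLe {G : Type*} [Group G] (D : Set G) (H : Subgroup G) (m : ℕ) : Prop :=
  ∃ S : Finset G, (S : Set G) ⊆ (H : Set G) ∩ D ∧ S.card ≤ m ∧ Subgroup.closure (S : Set G) = H

/-- `H` is a `D`-subgroup of `G`, i.e. it is generated by `H ∩ D`. -/
def IsDSubgroup {G : Type*} [Group G] (D : Set G) (H : Subgroup G) : Prop :=
  Subgroup.closure ((H : Set G) ∩ D) = H

/-- Two conjugation structures have the same central type: there is a bijection
intertwining the two conjugation maps (hence preserving commuting pairs and lines). -/
def SameCT {X Y : Type*} (τX : X → X → X) (τY : Y → Y → Y) : Prop :=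
  ∃ φ : X ≃ Y, ∀ a b : X, φ (τX a b) = τY (φ a) (φ b)

/-- The set of transpositions of the symmetric group on `m` letters. -/
def swapSet (m : ℕ) : Set (Equiv.Perm (Fin m)) := {σ | σ.IsSwap}

lemma swapSet_selfConj (m : ℕ) : SelfConj conjBy (swapSet m) := by
  rintro a ⟨x, y, hxy, rfl⟩ b _
  refine ⟨b⁻¹ x, b⁻¹ y, fun h => hxy (by simpa using congrArg b h), ?_⟩
  have h := Equiv.swap_apply_apply b⁻¹ x y
  rw [inv_inv] at h
  exact h.symm

/-- The conjugation structure on the set of transpositions of `S_m`. -/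
def swapConj (m : ℕ) : ↥(swapSet m) → ↥(swapSet m) → ↥(swapSet m) :=
  setConj (swapSet_selfConj m)

/-- The conjugation structure on the transposition class of the Moufang-type group
`3ᵐ:2 = (𝔽₃ᵐ) ⋊ {±1}`: transpositions are indexed by `𝔽₃ᵐ` and `x^y = -x-y`. -/
def affConj (m : ℕ) : (Fin m → ZMod 3) → (Fin m → ZMod 3) → (Fin m → ZMod 3) :=
  fun v w => -v - w

/-- `H` is a plane of `(G, D)`: a 3-generated but not 2-generated `D`-subgroup. -/
def IsPlane {G : Type*} [Group G] (D : Set G) (H : Subgroup G) : Prop :=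
  IsDSubgroup D H ∧ GenByLe D H 3 ∧ ¬ GenByLe D H 2

/-- A dual affine plane: a plane with the same central type as `(S₄, transpositions)`. -/
def IsDualAffinePlane {G : Type*} [Group G] {D : Set G} (hD : Is3TG G D)
    (H : Subgroup G) : Prop :=
  IsPlane D H ∧ SameCT (setConj (hD.selfConj_inter H)) (swapConj 4)

/-- An affine plane: a plane with the same central type as `3²:2`. -/
def IsAffinePlane {G : Type*} [Group G] {D : Set G} (hD : Is3TG G D)
    (H : Subgroup G) : Prop :=
  IsPlane D H ∧ SameCT (setConj (hD.selfConj_inter H)) (affConj 2)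

/-- A line `L` of `(G, D)` is near-solid: every 4-generated (and not 3-generated)
`D`-subgroup `H` with `L ⊆ H ∩ D` either has the central type of `(S₅, transpositions)`,
or has the central type of `3³:S₄` (that is, `3ⁿ:W` for a root system of type `A₃`,
i.e. an irreducible simply laced root system of rank 3) via a bijection carrying `L` to
a vertical line. -/
def NearSolid {G : Type*} [Group G] {D : Set G} (hD : Is3TG G D) (L : Set G) : Prop :=
  IsLine D L ∧ ∀ H : Subgroup G, IsDSubgroup D H → GenByLe D H 4 → ¬ GenByLe D H 3 →
    L ⊆ (H : Set G) ∩ D →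
    SameCT (setConj (hD.selfConj_inter H)) (swapConj 5) ∨
    ∃ RS : SLRootSystem 3, ∃ φ : ↥((H : Set G) ∩ D) ≃ D0 RS,
      (∀ a b, φ (setConj (hD.selfConj_inter H) a b) = conj0 RS (φ a) (φ b)) ∧
      IsVertLine RS (φ '' {x : ↥((H : Set G) ∩ D) | (x : G) ∈ L})

instance (m : ℕ) : Fintype ↥(swapSet m) := Fintype.ofFinite _

/-- Conjugating a set of transpositions by the transposition `t`. -/
def conjSet {X : Type*} (τ : X → X → X) (t : X) (L : Set X) : Set X :=
  (fun a => τ a t) '' L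

/-- Two subsets of the transposition class are in the same orbit under the conjugation
action of the group (the group is generated by its transpositions, so its orbits agree
with those of words in the conjugation maps by transpositions). -/
def inSameOrbit {X : Type*} (τ : X → X → X) (L₁ L₂ : Set X) : Prop :=
  ∃ ts : List X, L₂ = ts.foldl (fun L t => conjSet τ t L) L₁


/-! ### Auxiliary development for Statement 5 -/

namespace S5

variable {RS : SLRootSystem 3}

lemma not_neg_pos {v : Fin 3 → ℤ} (hv : v ∈ RS.pos) : -v ∉ RS.pos :=
  (RS.pos_iff v (RS.pos_subset hv)).mp hv

lemma neg_pos {v : Fin 3 → ℤ} (hΦ : v ∈ RS.Φ) (hv : v ∉ RS.pos) : -v ∈ RS.pos := by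
  by_contra h
  exact hv ((RS.pos_iff v hΦ).mpr h)

lemma pos_ne_neg {v w : Fin 3 → ℤ} (hv : v ∈ RS.pos) (hw : w ∈ RS.pos) : v ≠ -w := by
  rintro rfl
  exact not_neg_pos hw hv

lemma eq_of_pos_pm {v w : Fin 3 → ℤ} (hv : v ∈ RS.pos) (hw : w ∈ RS.pos)
    (h : v = w ∨ v = -w) : v = w :=
  h.resolve_right (pos_ne_neg hv hw)

lemma phi_nonempty : RS.Φ.Nonempty := by
  by_contra h
  rw [Finset.not_nonempty_iff_eq_empty] at h
  have hs := RS.span_top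
  rw [h] at hs
  simp only [Finset.coe_empty, Submodule.span_empty] at hs
  have h1 : (fun _ => 1 : Fin 3 → ℤ) ∈ (⊥ : Submodule ℤ (Fin 3 → ℤ)) := by
    rw [hs]; trivial
  rw [Submodule.mem_bot] at h1
  have := congrFun h1 0
  simp at this

lemma exists_pos : ∃ v, v ∈ RS.pos := by
  obtain ⟨v, hv⟩ := phi_nonempty (RS := RS)
  by_cases h : v ∈ RS.pos
  · exact ⟨v, h⟩
  · exact ⟨-v, neg_pos hv h⟩

lemma D0_nonempty : Nonempty (D0 RS) := by
  obtain ⟨v, hv⟩ := exists_pos (RS := RS)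
  exact ⟨((⟨v, hv⟩ : ↥RS.pos), 0)⟩

/-- The positive representative of a root. -/
def posRoot (v : Fin 3 → ℤ) (hv : v ∈ RS.Φ) : ↥RS.pos :=
  if h : v ∈ RS.pos then ⟨v, h⟩ else ⟨-v, neg_pos hv h⟩

lemma posRoot_spec (v : Fin 3 → ℤ) (hv : v ∈ RS.Φ) :
    (posRoot v hv).1 = v ∨ (posRoot v hv).1 = -v := by
  unfold posRoot
  split_ifs <;> simp

/-- The doubled (unnormalized) point space. -/
abbrev Pt := (Fin 3 → ℤ) × ZMod 3

/-- Unnormalized conjugation. -/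
def cr (RS : SLRootSystem 3) (p q : Pt) : Pt :=
  (p.1 - RS.B q.1 p.1 • q.1, p.2 - ((RS.B q.1 p.1 : ℤ) : ZMod 3) * q.2)

def emb (a : D0 RS) : Pt := (a.1.1, a.2)

def nrm (RS : SLRootSystem 3) (p : Pt) : D0 RS :=
  if h : p.1 ∈ RS.pos then (⟨p.1, h⟩, p.2)
  else if h2 : -p.1 ∈ RS.pos then (⟨-p.1, h2⟩, -p.2)
  else Classical.choice D0_nonempty

lemma nrm_emb (a : D0 RS) : nrm RS (emb a) = a := by
  unfold nrm emb
  erw [dif_pos a.1.2]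
  rfl

lemma emb_nrm {p : Pt} (hp : p.1 ∈ RS.Φ) :
    emb (nrm RS p) = p ∨ emb (nrm RS p) = (-p.1, -p.2) := by
  unfold nrm
  by_cases h : p.1 ∈ RS.pos
  · erw [dif_pos h]; left; rfl
  · erw [dif_neg h, dif_pos (neg_pos hp h)]; right; rfl

lemma nrm_neg {p : Pt} (hp : p.1 ∈ RS.Φ) : nrm RS (-p.1, -p.2) = nrm RS p := by
  unfold nrm
  by_cases h : p.1 ∈ RS.pos
  · have h1 : -p.1 ∉ RS.pos := not_neg_pos h
    erw [dif_neg h1, dif_pos h, dif_pos (show -(-p.1) ∈ RS.pos by rwa [neg_neg])]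
    refine Prod.ext ?_ ?_
    · exact Subtype.ext (neg_neg _)
    · exact neg_neg _
  · have h2 : -p.1 ∈ RS.pos := neg_pos hp h
    erw [dif_pos h2, dif_neg h]
    erw [dif_pos h2]

lemma conj0_eq (a b : D0 RS) : conj0 RS a b = nrm RS (cr RS (emb a) (emb b)) := by
  unfold conj0 nrm cr emb
  by_cases h : a.1.1 - RS.B b.1.1 a.1.1 • b.1.1 ∈ RS.pos
  · erw [dif_pos h, dif_pos h]
  · erw [dif_neg h, dif_neg h,
      dif_pos (RS.neg_reflect_mem_pos b.1.2 a.1.2 h)]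

lemma B_sub_left (u v w : Fin 3 → ℤ) : RS.B (u - v) w = RS.B u w - RS.B v w := by
  rw [map_sub]; rfl

lemma B_smul_left (k : ℤ) (u w : Fin 3 → ℤ) : RS.B (k • u) w = k * RS.B u w := by
  rw [map_smul]; rfl

lemma B_sub_right (u v w : Fin 3 → ℤ) : RS.B w (u - v) = RS.B w u - RS.B w v :=
  map_sub _ _ _

lemma B_smul_right (k : ℤ) (u w : Fin 3 → ℤ) : RS.B w (k • u) = k * RS.B w u := by
  rw [map_smul, smul_eq_mul]

lemma B_neg_left (u w : Fin 3 → ℤ) : RS.B (-u) w = -RS.B u w := by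
  rw [map_neg]; rfl

lemma B_neg_right (u w : Fin 3 → ℤ) : RS.B w (-u) = -RS.B w u := map_neg _ _

lemma cr_neg_left (p q : S5.Pt) :
    cr RS (-p.1, -p.2) q = (-(cr RS p q).1, -(cr RS p q).2) := by
  unfold cr
  refine Prod.ext ?_ ?_
  · show -p.1 - RS.B q.1 (-p.1) • q.1 = -(p.1 - RS.B q.1 p.1 • q.1)
    rw [B_neg_right]
    module
  · show -p.2 - ((RS.B q.1 (-p.1) : ℤ) : ZMod 3) * q.2 = -(p.2 - _ * q.2)
    rw [B_neg_right]
    push_cast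
    ring

lemma cr_neg_right (p q : S5.Pt) : cr RS p (-q.1, -q.2) = cr RS p q := by
  unfold cr
  refine Prod.ext ?_ ?_
  · show p.1 - RS.B (-q.1) p.1 • -q.1 = p.1 - RS.B q.1 p.1 • q.1
    rw [B_neg_left]
    module
  · show p.2 - ((RS.B (-q.1) p.1 : ℤ) : ZMod 3) * -q.2 = _
    rw [B_neg_left]
    push_cast
    ring

lemma cr_fst_mem {p q : S5.Pt} (hp : p.1 ∈ RS.Φ) (hq : q.1 ∈ RS.Φ) :
    (cr RS p q).1 ∈ RS.Φ :=
  RS.reflect_mem q.1 hq p.1 hp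

lemma cr_assoc (p q r : S5.Pt) (hr : RS.B r.1 r.1 = 2) :
    cr RS (cr RS p q) r = cr RS (cr RS p r) (cr RS q r) := by
  have hsym : RS.B q.1 r.1 = RS.B r.1 q.1 := RS.symm _ _
  unfold cr
  refine Prod.ext ?_ ?_
  · simp only [B_sub_left, B_smul_left, B_sub_right, B_smul_right]
    rw [hsym, hr]
    module
  · simp only [B_sub_left, B_smul_left, B_sub_right, B_smul_right]
    rw [hsym, hr]
    push_cast
    ring

lemma cr_invol (p q : S5.Pt) (hq : RS.B q.1 q.1 = 2) :
    cr RS (cr RS p q) q = p := by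
  unfold cr
  refine Prod.ext ?_ ?_
  · simp only [B_sub_left, B_smul_left, B_sub_right, B_smul_right]
    rw [hq]
    module
  · simp only [B_sub_left, B_smul_left, B_sub_right, B_smul_right]
    rw [hq]
    push_cast
    ring

lemma root_mem (A : ↥RS.pos) : A.1 ∈ RS.Φ := RS.pos_subset A.2

lemma root_norm' (A : ↥RS.pos) : RS.B A.1 A.1 = 2 := RS.root_norm _ (root_mem A)

lemma conj0_nrm_right (a : D0 RS) {p : S5.Pt} (hp : p.1 ∈ RS.Φ) :
    conj0 RS a (nrm RS p) = nrm RS (cr RS (emb a) p) := by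
  rw [conj0_eq]
  rcases emb_nrm (RS := RS) hp with h | h
  · rw [h]
  · rw [h, cr_neg_right]

lemma conj0_nrm_left {p : S5.Pt} (hp : p.1 ∈ RS.Φ) (b : D0 RS) :
    conj0 RS (nrm RS p) b = nrm RS (cr RS p (emb b)) := by
  rw [conj0_eq]
  rcases emb_nrm (RS := RS) hp with h | h
  · rw [h]
  · rw [h, cr_neg_left]
    exact nrm_neg (cr_fst_mem hp (root_mem b.1))

lemma conj0_conj (a b t : D0 RS) :
    conj0 RS (conj0 RS a b) t = conj0 RS (conj0 RS a t) (conj0 RS b t) := by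
  have ht : RS.B (emb t).1 (emb t).1 = 2 := root_norm' t.1
  have hab : (cr RS (emb a) (emb b)).1 ∈ RS.Φ := cr_fst_mem (root_mem a.1) (root_mem b.1)
  have hat : (cr RS (emb a) (emb t)).1 ∈ RS.Φ := cr_fst_mem (root_mem a.1) (root_mem t.1)
  have hbt : (cr RS (emb b) (emb t)).1 ∈ RS.Φ := cr_fst_mem (root_mem b.1) (root_mem t.1)
  rw [conj0_eq a b, conj0_nrm_left hab t, cr_assoc _ _ _ ht]
  rw [conj0_eq b t, conj0_eq a t, conj0_nrm_left hat (nrm RS (cr RS (emb b) (emb t)))]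
  rcases emb_nrm (RS := RS) hbt with h | h
  · rw [h]
  · rw [h, cr_neg_right]

lemma conj0_invol (a t : D0 RS) : conj0 RS (conj0 RS a t) t = a := by
  have ht : RS.B (emb t).1 (emb t).1 = 2 := root_norm' t.1
  have hat : (cr RS (emb a) (emb t)).1 ∈ RS.Φ := cr_fst_mem (root_mem a.1) (root_mem t.1)
  rw [conj0_eq a t, conj0_nrm_left hat t, cr_invol _ _ ht, nrm_emb]


lemma h3zmod : (3 : ZMod 3) = 0 := by decide

lemma nrm_neg2 (v : Fin 3 → ℤ) (z : ZMod 3) (hv : v ∈ RS.Φ) :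
    nrm RS (-v, -z) = nrm RS (v, z) :=
  nrm_neg (p := (v, z)) hv

lemma nrm_eq_of (v : Fin 3 → ℤ) (z : ZMod 3) (C : ↥RS.pos) (w : ZMod 3)
    (h : (v = C.1 ∧ z = w) ∨ (v = -C.1 ∧ z = -w)) : nrm RS (v, z) = (C, w) := by
  obtain ⟨h1, h2⟩ | ⟨h1, h2⟩ := h
  · unfold nrm
    erw [dif_pos (show (v, z).1 ∈ RS.pos from h1 ▸ C.2)]
    exact Prod.ext (Subtype.ext h1) h2
  · unfold nrm
    have hnp : (v, z).1 ∉ RS.pos := by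
      show v ∉ RS.pos
      rw [h1]; exact not_neg_pos C.2
    erw [dif_neg hnp, dif_pos (show -(v, z).1 ∈ RS.pos by show -v ∈ RS.pos; rw [h1, neg_neg]; exact C.2)]
    refine Prod.ext (Subtype.ext ?_) ?_
    · show -v = C.1
      rw [h1, neg_neg]
    · show -z = w
      rw [h2, neg_neg]

lemma nrm_congr (v : Fin 3 → ℤ) (z : ZMod 3) (v' : Fin 3 → ℤ) (z' : ZMod 3)
    (hv' : v' ∈ RS.Φ)
    (h : (v = v' ∧ z = z') ∨ (v = -v' ∧ z = -z')) : nrm RS (v, z) = nrm RS (v', z') := by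
  obtain ⟨h1, h2⟩ | ⟨h1, h2⟩ := h
  · rw [h1, h2]
  · rw [h1, h2]
    exact nrm_neg2 v' z' hv'

lemma conj0_mk (A B : ↥RS.pos) (s u : ZMod 3) :
    conj0 RS (A, s) (B, u) =
      nrm RS (A.1 - RS.B B.1 A.1 • B.1, s - ((RS.B B.1 A.1 : ℤ) : ZMod 3) * u) :=
  conj0_eq _ _

lemma nrm_cr_nrm (A : ↥RS.pos) (s : ZMod 3) (v : Fin 3 → ℤ) (z : ZMod 3) (hv : v ∈ RS.Φ) :
    conj0 RS (A, s) (nrm RS (v, z)) =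
      nrm RS (A.1 - RS.B v A.1 • v, s - ((RS.B v A.1 : ℤ) : ZMod 3) * z) :=
  conj0_nrm_right (A, s) (p := (v, z)) hv

lemma nrm_cr_left (v : Fin 3 → ℤ) (z : ZMod 3) (B : ↥RS.pos) (u : ZMod 3) (hv : v ∈ RS.Φ) :
    conj0 RS (nrm RS (v, z)) (B, u) =
      nrm RS (v - RS.B B.1 v • B.1, z - ((RS.B B.1 v : ℤ) : ZMod 3) * u) :=
  conj0_nrm_left (p := (v, z)) hv (B, u)

lemma conj0_vert (A : ↥RS.pos) (s u : ZMod 3) :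
    conj0 RS ((A, s) : D0 RS) (A, u) = (A, -s - u) := by
  rw [conj0_mk, root_norm' A]
  apply nrm_eq_of
  right
  constructor
  · module
  · push_cast
    linear_combination (-u) * h3zmod

lemma conj0_of_orth (a b : D0 RS) (h : RS.B b.1.1 a.1.1 = 0) : conj0 RS a b = a := by
  have ha : a = (a.1, a.2) := rfl
  have hb : b = (b.1, b.2) := rfl
  rw [ha, hb, conj0_mk, h]
  apply nrm_eq_of
  left
  constructor
  · module
  · push_cast
    ring

lemma k_cases {a b : D0 RS} (hne : a.1 ≠ b.1) (h : conj0 RS a b ≠ a) :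
    RS.B b.1.1 a.1.1 = 1 ∨ RS.B b.1.1 a.1.1 = -1 := by
  have h0 : RS.B b.1.1 a.1.1 ≠ 0 := fun h0 => h (conj0_of_orth a b h0)
  have hne1 : b.1.1 ≠ a.1.1 := fun hh => hne (Subtype.ext hh.symm)
  have hne2 : b.1.1 ≠ -a.1.1 := pos_ne_neg b.1.2 a.1.2
  rcases RS.cartan b.1.1 (root_mem b.1) a.1.1 (root_mem a.1) hne1 hne2 with h' | h' | h'
  · exact absurd h' h0
  · exact Or.inl h'
  · exact Or.inr h'

lemma gamma_ne (A B : ↥RS.pos) (k : ℤ) (hk : RS.B B.1 A.1 = k) (hk1 : k = 1 ∨ k = -1) :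
    A.1 - k • B.1 ≠ A.1 ∧ A.1 - k • B.1 ≠ -A.1 ∧
      A.1 - k • B.1 ≠ B.1 ∧ A.1 - k • B.1 ≠ -B.1 := by
  have hAB : RS.B A.1 B.1 = k := by rw [RS.symm]; exact hk
  have hAA := root_norm' A
  have hBB := root_norm' B
  refine ⟨?_, ?_, ?_, ?_⟩ <;> intro h
  · have h2 := congrArg (fun v => RS.B A.1 v) h
    simp only [B_sub_right, B_smul_right, hAA, hAB] at h2
    rcases hk1 with rfl | rfl <;> omega
  · have h2 := congrArg (fun v => RS.B A.1 v) h
    simp only [B_sub_right, B_smul_right, B_neg_right, hAA, hAB] at h2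
    rcases hk1 with rfl | rfl <;> omega
  · have h2 := congrArg (fun v => RS.B B.1 v) h
    simp only [B_sub_right, B_smul_right, hk, hBB] at h2
    rcases hk1 with rfl | rfl <;> omega
  · have h2 := congrArg (fun v => RS.B B.1 v) h
    simp only [B_sub_right, B_smul_right, B_neg_right, hk, hBB] at h2
    rcases hk1 with rfl | rfl <;> omega


section PairIdentities

variable (A B : ↥RS.pos) (s u : ZMod 3)

lemma gammaPhi : A.1 - RS.B B.1 A.1 • B.1 ∈ RS.Φ :=
  RS.reflect_mem B.1 (root_mem B) A.1 (root_mem A)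

lemma conj0_symm (hk1 : RS.B B.1 A.1 = 1 ∨ RS.B B.1 A.1 = -1) :
    conj0 RS (B, u) (A, s) = conj0 RS (A, s) (B, u) := by
  have hγ := gammaPhi A B
  have hAB : RS.B A.1 B.1 = RS.B B.1 A.1 := RS.symm _ _
  rw [conj0_mk B A u s, conj0_mk A B s u, hAB]
  rcases hk1 with h | h <;> rw [h] at hγ ⊢
  · refine nrm_congr _ _ _ _ hγ (Or.inr ⟨?_, ?_⟩)
    · module
    · push_cast; ring
  · refine nrm_congr _ _ _ _ hγ (Or.inl ⟨?_, ?_⟩)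
    · module
    · push_cast; ring

lemma conj0_H2 (hk1 : RS.B B.1 A.1 = 1 ∨ RS.B B.1 A.1 = -1) :
    conj0 RS (A, s) (conj0 RS (A, s) (B, u)) = (B, u) := by
  have hγ := gammaPhi A B
  have hAB : RS.B A.1 B.1 = RS.B B.1 A.1 := RS.symm _ _
  rw [conj0_mk A B s u]
  rcases hk1 with h | h <;> rw [h] at hγ ⊢ <;>
    rw [nrm_cr_nrm A s _ _ hγ] <;> apply nrm_eq_of
  · refine Or.inl ⟨?_, ?_⟩
    · simp only [B_sub_left, B_smul_left, B_sub_right, B_smul_right, root_norm', hAB, h]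
      module
    · simp only [B_sub_left, B_smul_left, B_sub_right, B_smul_right, root_norm', hAB, h]
      push_cast; ring
  · refine Or.inr ⟨?_, ?_⟩
    · simp only [B_sub_left, B_smul_left, B_sub_right, B_smul_right, root_norm', hAB, h]
      module
    · simp only [B_sub_left, B_smul_left, B_sub_right, B_smul_right, root_norm', hAB, h]
      push_cast; ring

lemma conj0_H3 (hk1 : RS.B B.1 A.1 = 1 ∨ RS.B B.1 A.1 = -1) :
    conj0 RS (conj0 RS (A, s) (B, u)) (A, s) = (B, u) := by
  have hγ := gammaPhi A B
  have hAB : RS.B A.1 B.1 = RS.B B.1 A.1 := RS.symm _ _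
  rw [conj0_mk A B s u]
  rcases hk1 with h | h <;> rw [h] at hγ ⊢ <;>
    rw [nrm_cr_left _ _ A s hγ] <;> apply nrm_eq_of
  · refine Or.inr ⟨?_, ?_⟩
    · simp only [B_sub_left, B_smul_left, B_sub_right, B_smul_right, root_norm', hAB, h]
      module
    · simp only [B_sub_left, B_smul_left, B_sub_right, B_smul_right, root_norm', hAB, h]
      push_cast; ring
  · refine Or.inl ⟨?_, ?_⟩
    · simp only [B_sub_left, B_smul_left, B_sub_right, B_smul_right, root_norm', hAB, h]
      module
    · simp only [B_sub_left, B_smul_left, B_sub_right, B_smul_right, root_norm', hAB, h]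
      push_cast; ring

lemma conj0_H4 (hk1 : RS.B B.1 A.1 = 1 ∨ RS.B B.1 A.1 = -1) :
    conj0 RS (B, u) (conj0 RS (A, s) (B, u)) = (A, s) := by
  have hγ := gammaPhi A B
  have hAB : RS.B A.1 B.1 = RS.B B.1 A.1 := RS.symm _ _
  rw [conj0_mk A B s u]
  rcases hk1 with h | h <;> rw [h] at hγ ⊢ <;>
    rw [nrm_cr_nrm B u _ _ hγ] <;> apply nrm_eq_of
  · refine Or.inl ⟨?_, ?_⟩
    · simp only [B_sub_left, B_smul_left, B_sub_right, B_smul_right, root_norm', hAB, h]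
      module
    · simp only [B_sub_left, B_smul_left, B_sub_right, B_smul_right, root_norm', hAB, h]
      push_cast; ring
  · refine Or.inr ⟨?_, ?_⟩
    · simp only [B_sub_left, B_smul_left, B_sub_right, B_smul_right, root_norm', hAB, h]
      module
    · simp only [B_sub_left, B_smul_left, B_sub_right, B_smul_right, root_norm', hAB, h]
      push_cast; ring

lemma conj0_H5 (hk1 : RS.B B.1 A.1 = 1 ∨ RS.B B.1 A.1 = -1) :
    conj0 RS (conj0 RS (A, s) (B, u)) (B, u) = (A, s) := by
  have hγ := gammaPhi A B
  have hAB : RS.B A.1 B.1 = RS.B B.1 A.1 := RS.symm _ _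
  rw [conj0_mk A B s u]
  rcases hk1 with h | h <;> rw [h] at hγ ⊢ <;>
    rw [nrm_cr_left _ _ B u hγ] <;> apply nrm_eq_of <;> refine Or.inl ⟨?_, ?_⟩
  · simp only [B_sub_left, B_smul_left, B_sub_right, B_smul_right, root_norm', hAB, h]
    module
  · simp only [B_sub_left, B_smul_left, B_sub_right, B_smul_right, root_norm', hAB, h]
    push_cast; ring
  · simp only [B_sub_left, B_smul_left, B_sub_right, B_smul_right, root_norm', hAB, h]
    module
  · simp only [B_sub_left, B_smul_left, B_sub_right, B_smul_right, root_norm', hAB, h]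
    push_cast; ring

lemma conj0_fst_cases :
    (conj0 RS (A, s) (B, u)).1.1 = A.1 - RS.B B.1 A.1 • B.1 ∨
      (conj0 RS (A, s) (B, u)).1.1 = -(A.1 - RS.B B.1 A.1 • B.1) := by
  have hγ := gammaPhi A B
  rw [conj0_mk]
  unfold nrm
  split_ifs with h1 h2
  · left; erw [dif_pos h1]
  · right; erw [dif_neg h1, dif_pos (neg_pos hγ h1)]

lemma nrm_fst_indep (v : Fin 3 → ℤ) (z z' : ZMod 3) :
    (nrm RS (v, z)).1 = (nrm RS (v, z')).1 := by
  unfold nrm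
  by_cases h : v ∈ RS.pos
  · erw [dif_pos h, dif_pos h]
  · by_cases h2 : -v ∈ RS.pos
    · erw [dif_neg h, dif_neg h, dif_pos h2, dif_pos h2]
    · erw [dif_neg h, dif_neg h, dif_neg h2, dif_neg h2]

lemma conj0_fst_indep (s' u' : ZMod 3) :
    (conj0 RS (A, s) (B, u)).1 = (conj0 RS (A, s') (B, u')).1 := by
  rw [conj0_mk, conj0_mk]
  exact nrm_fst_indep _ _ _

lemma third_root_ne (hk1 : RS.B B.1 A.1 = 1 ∨ RS.B B.1 A.1 = -1) :
    (conj0 RS (A, s) (B, u)).1 ≠ A ∧ (conj0 RS (A, s) (B, u)).1 ≠ B := by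
  obtain ⟨g1, g2, g3, g4⟩ := gamma_ne A B (RS.B B.1 A.1) rfl hk1
  rcases conj0_fst_cases A B s u with h | h <;> constructor <;> intro hc <;>
    rw [hc] at h
  · exact g1 h.symm
  · exact g3 h.symm
  · exact g2 (neg_eq_iff_eq_neg.mp h.symm)
  · exact g4 (neg_eq_iff_eq_neg.mp h.symm)

end PairIdentities


lemma zmod3_cover : ∀ s u z : ZMod 3, s ≠ u → z = s ∨ z = u ∨ z = -s - u := by decide

lemma vert_line_eq (A : ↥RS.pos) (s u : ZMod 3) (hsu : s ≠ u) :
    ({((A, s) : D0 RS), (A, u), conj0 RS (A, s) (A, u)} : Set (D0 RS)) =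
      {p : D0 RS | p.1 = A} := by
  rw [conj0_vert]
  ext p
  simp only [Set.mem_insert_iff, Set.mem_singleton_iff, Set.mem_setOf_eq]
  constructor
  · rintro (rfl | rfl | rfl) <;> rfl
  · intro hp
    have hpp : p = (A, p.2) := Prod.ext hp rfl
    rcases zmod3_cover s u p.2 hsu with h | h | h
    · left; rw [hpp, h]
    · right; left; rw [hpp, h]
    · right; right; rw [hpp, h]; exact Set.mem_singleton _

lemma fiber_tline (A : ↥RS.pos) : IsTLine (conj0 RS) {p : D0 RS | p.1 = A} := by
  refine ⟨(A, 0), (A, 1), ?_, ?_, (vert_line_eq A 0 1 (by decide)).symm⟩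
  · intro h
    have h2 : (0 : ZMod 3) = 1 := congrArg Prod.snd h
    exact absurd h2 (by decide)
  · rw [conj0_vert]
    intro h
    have h2 : (-0 - 1 : ZMod 3) = 0 := congrArg Prod.snd h
    exact absurd h2 (by decide)

lemma not_vert_of_two {L : Set (D0 RS)} (p q : D0 RS) (hp : p ∈ L) (hq : q ∈ L)
    (hne : p.1 ≠ q.1) : ¬ IsVertLine RS L := by
  rintro ⟨A, rfl⟩
  simp only [Set.mem_setOf_eq] at hp hq
  exact hne (hp.trans hq.symm)

lemma tline_classify {L : Set (D0 RS)} (hL : IsTLine (conj0 RS) L) :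
    IsVertLine RS L ∨
      ∃ a b : D0 RS, a.1 ≠ b.1 ∧ (RS.B b.1.1 a.1.1 = 1 ∨ RS.B b.1.1 a.1.1 = -1) ∧
        L = {a, b, conj0 RS a b} := by
  obtain ⟨a, b, hab, hc, rfl⟩ := hL
  by_cases h : a.1 = b.1
  · left
    refine ⟨a.1, ?_⟩
    have ha : a = (a.1, a.2) := rfl
    have hb : b = (a.1, b.2) := Prod.ext h.symm rfl
    have hsu : a.2 ≠ b.2 := by
      intro h2
      exact hab (by rw [ha, hb, h2])
    rw [ha, hb]
    exact vert_line_eq a.1 a.2 b.2 hsu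
  · right
    exact ⟨a, b, h, k_cases h hc, rfl⟩

lemma line_two_points {L : Set (D0 RS)} (hL : IsTLine (conj0 RS) L) {p q : D0 RS}
    (hp : p ∈ L) (hq : q ∈ L) (hpq : p ≠ q) : L = {p, q, conj0 RS p q} := by
  rcases tline_classify hL with ⟨A, rfl⟩ | ⟨a, b, hab, hk1, rfl⟩
  · simp only [Set.mem_setOf_eq] at hp hq
    have hP : p = (A, p.2) := Prod.ext hp rfl
    have hQ : q = (A, q.2) := Prod.ext hq rfl
    have hsu : p.2 ≠ q.2 := fun h2 => hpq (by rw [hP, hQ, h2])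
    rw [hP, hQ]
    exact (vert_line_eq A p.2 q.2 hsu).symm
  · have ha : a = (a.1, a.2) := rfl
    have hb : b = (b.1, b.2) := rfl
    have E1 : conj0 RS b a = conj0 RS a b := by
      rw [ha, hb]; exact conj0_symm a.1 b.1 a.2 b.2 hk1
    have E2 : conj0 RS a (conj0 RS a b) = b := by
      rw [ha, hb]; exact conj0_H2 a.1 b.1 a.2 b.2 hk1
    have E3 : conj0 RS (conj0 RS a b) a = b := by
      rw [ha, hb]; exact conj0_H3 a.1 b.1 a.2 b.2 hk1
    have E4 : conj0 RS b (conj0 RS a b) = a := by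
      rw [ha, hb]; exact conj0_H4 a.1 b.1 a.2 b.2 hk1
    have E5 : conj0 RS (conj0 RS a b) b = a := by
      rw [ha, hb]; exact conj0_H5 a.1 b.1 a.2 b.2 hk1
    simp only [Set.mem_insert_iff, Set.mem_singleton_iff] at hp hq
    rcases hp with rfl | rfl | rfl <;> rcases hq with rfl | rfl | rfl
    · exact absurd rfl hpq
    · rfl
    · rw [E2]
      ext w; simp only [Set.mem_insert_iff, Set.mem_singleton_iff]; tauto
    · rw [E1]
      ext w; simp only [Set.mem_insert_iff, Set.mem_singleton_iff]; tauto
    · exact absurd rfl hpq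
    · rw [E4]
      ext w; simp only [Set.mem_insert_iff, Set.mem_singleton_iff]; tauto
    · rw [E3]
      ext w; simp only [Set.mem_insert_iff, Set.mem_singleton_iff]; tauto
    · rw [E5]
      ext w; simp only [Set.mem_insert_iff, Set.mem_singleton_iff]; tauto
    · exact absurd rfl hpq

lemma tline_of_pair {a b : D0 RS} (hab : a ≠ b) (hc : conj0 RS a b ≠ a) :
    IsTLine (conj0 RS) {a, b, conj0 RS a b} :=
  ⟨a, b, hab, hc, rfl⟩


lemma conjSet_conjSet (t : D0 RS) (L : Set (D0 RS)) :
    conjSet (conj0 RS) t (conjSet (conj0 RS) t L) = L := by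
  unfold conjSet
  rw [Set.image_image]
  simp only [conj0_invol]
  exact Set.image_id L

lemma conj0_right_inj {x y : D0 RS} (t : D0 RS) (h : conj0 RS x t = conj0 RS y t) :
    x = y := by
  have h2 := congrArg (fun z => conj0 RS z t) h
  simpa only [conj0_invol] using h2

lemma conjSet_tline {L : Set (D0 RS)} (hL : IsTLine (conj0 RS) L) (t : D0 RS) :
    IsTLine (conj0 RS) (conjSet (conj0 RS) t L) := by
  obtain ⟨a, b, hab, hc, rfl⟩ := hL
  refine ⟨conj0 RS a t, conj0 RS b t, fun h => hab (conj0_right_inj t h), ?_, ?_⟩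
  · rw [← conj0_conj]
    exact fun h => hc (conj0_right_inj t h)
  · unfold conjSet
    rw [Set.image_insert_eq, Set.image_insert_eq, Set.image_singleton, ← conj0_conj]

lemma conj0_fst_only (p q : D0 RS) (hpq : p.1 = q.1) (t : D0 RS) :
    (conj0 RS p t).1 = (conj0 RS q t).1 := by
  have hp : p = (p.1, p.2) := rfl
  have hq : q = (q.1, q.2) := rfl
  have ht : t = (t.1, t.2) := rfl
  rw [hp, hq, ht, hpq]
  exact conj0_fst_indep q.1 t.1 p.2 t.2 q.2 t.2

lemma conjSet_fiber (A : ↥RS.pos) (t : D0 RS) :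
    conjSet (conj0 RS) t {p : D0 RS | p.1 = A} =
      {p : D0 RS | p.1 = (conj0 RS (A, 0) t).1} := by
  ext y
  constructor
  · rintro ⟨x, hx, rfl⟩
    simp only [Set.mem_setOf_eq] at hx ⊢
    exact conj0_fst_only x (A, 0) hx t
  · intro hy
    simp only [Set.mem_setOf_eq] at hy
    refine ⟨conj0 RS y t, ?_, conj0_invol y t⟩
    simp only [Set.mem_setOf_eq]
    have h1 : (conj0 RS y t).1 = (conj0 RS (conj0 RS (A, 0) t) t).1 :=
      conj0_fst_only y (conj0 RS (A, 0) t) hy t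
    erw [conj0_invol] at h1; exact h1

lemma vert_conjSet_iff (t : D0 RS) (L : Set (D0 RS)) :
    IsVertLine RS (conjSet (conj0 RS) t L) ↔ IsVertLine RS L := by
  constructor
  · rintro ⟨A, hA⟩
    have h2 := congrArg (conjSet (conj0 RS) t) hA
    rw [conjSet_conjSet] at h2
    rw [h2, conjSet_fiber]
    exact ⟨_, rfl⟩
  · rintro ⟨A, rfl⟩
    rw [conjSet_fiber]
    exact ⟨_, rfl⟩

lemma orbit_refl (L : Set (D0 RS)) : inSameOrbit (conj0 RS) L L := ⟨[], rfl⟩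

lemma orbit_step (t : D0 RS) (L : Set (D0 RS)) :
    inSameOrbit (conj0 RS) L (conjSet (conj0 RS) t L) := ⟨[t], rfl⟩

lemma orbit_trans {L₁ L₂ L₃ : Set (D0 RS)} (h1 : inSameOrbit (conj0 RS) L₁ L₂)
    (h2 : inSameOrbit (conj0 RS) L₂ L₃) : inSameOrbit (conj0 RS) L₁ L₃ := by
  obtain ⟨ts1, rfl⟩ := h1
  obtain ⟨ts2, rfl⟩ := h2
  exact ⟨ts1 ++ ts2, List.foldl_append.symm⟩

lemma foldl_vert (ts : List (D0 RS)) (L : Set (D0 RS)) :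
    IsVertLine RS (ts.foldl (fun L t => conjSet (conj0 RS) t L) L) ↔ IsVertLine RS L := by
  induction ts generalizing L with
  | nil => exact Iff.rfl
  | cons t ts ih =>
    rw [List.foldl_cons]
    exact (ih _).trans (vert_conjSet_iff t L)

lemma orbit_vert_iff {L₁ L₂ : Set (D0 RS)} (h : inSameOrbit (conj0 RS) L₁ L₂) :
    IsVertLine RS L₁ ↔ IsVertLine RS L₂ := by
  obtain ⟨ts, rfl⟩ := h
  exact (foldl_vert ts L₁).symm

lemma foldl_image (ts : List (D0 RS)) (L : Set (D0 RS)) :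
    ts.foldl (fun L t => conjSet (conj0 RS) t L) L =
      (fun x => ts.foldl (conj0 RS) x) '' L := by
  induction ts generalizing L with
  | nil => simp only [List.foldl_nil]; exact (Set.image_id L).symm
  | cons t ts ih =>
    rw [List.foldl_cons, ih]
    unfold conjSet
    rw [Set.image_image]
    rfl

lemma nrm_fst_eq (v : Fin 3 → ℤ) (z : ZMod 3) (C : ↥RS.pos)
    (h : v = C.1 ∨ v = -C.1) : (nrm RS (v, z)).1 = C := by
  rcases h with h1 | h1
  · unfold nrm
    erw [dif_pos (show (v, z).1 ∈ RS.pos from h1 ▸ C.2)]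
    exact Subtype.ext h1
  · unfold nrm
    have hnp : (v, z).1 ∉ RS.pos := by
      show v ∉ RS.pos
      rw [h1]; exact not_neg_pos C.2
    erw [dif_neg hnp, dif_pos (show -(v, z).1 ∈ RS.pos by show -v ∈ RS.pos; rw [h1, neg_neg]; exact C.2)]
    refine Subtype.ext ?_
    show -v = C.1
    rw [h1, neg_neg]

lemma fiber_step {A B : ↥RS.pos} (hk : RS.B B.1 A.1 = 1 ∨ RS.B B.1 A.1 = -1) :
    inSameOrbit (conj0 RS) {p : D0 RS | p.1 = A} {p : D0 RS | p.1 = B} := by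
  have hδΦ : A.1 - RS.B B.1 A.1 • B.1 ∈ RS.Φ := gammaPhi A B
  set Δ : ↥RS.pos := posRoot _ hδΦ with hΔ
  have hB1 : RS.B Δ.1 A.1 • Δ.1 = RS.B (A.1 - RS.B B.1 A.1 • B.1) A.1 • (A.1 - RS.B B.1 A.1 • B.1) := by
    rcases posRoot_spec _ hδΦ with h | h <;> rw [hΔ, h]
    rw [B_neg_left]
    module
  have hfst : (conj0 RS ((A, 0) : D0 RS) (Δ, 0)).1 = B := by
    rw [conj0_mk, hB1]
    apply nrm_fst_eq
    have hAB : RS.B A.1 B.1 = RS.B B.1 A.1 := RS.symm _ _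
    rcases hk with h | h
    · left
      simp only [B_sub_left, B_smul_left, root_norm', hAB, h]
      module
    · right
      simp only [B_sub_left, B_smul_left, root_norm', hAB, h]
      module
  refine ⟨[(Δ, 0)], ?_⟩
  show {p : D0 RS | p.1 = B} = conjSet (conj0 RS) (Δ, 0) {p : D0 RS | p.1 = A}
  erw [conjSet_fiber, hfst]

lemma fiber_reach (A B : ↥RS.pos) :
    inSameOrbit (conj0 RS) {p : D0 RS | p.1 = A} {p : D0 RS | p.1 = B} := by
  classical
  set S : Finset (Fin 3 → ℤ) := RS.Φ.filter
    (fun v => ∃ C : ↥RS.pos, (C.1 = v ∨ C.1 = -v) ∧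
      inSameOrbit (conj0 RS) {p : D0 RS | p.1 = A} {p : D0 RS | p.1 = C}) with hSdef
  have hSsub : S ⊆ RS.Φ := Finset.filter_subset _ _
  have hclosed : ∀ u ∈ S, ∀ w ∈ RS.Φ, w ∉ S → RS.B u w = 0 := by
    intro u hu w hw hwS
    by_contra hB
    apply hwS
    obtain ⟨huΦ, C, hCu, hreach⟩ := Finset.mem_filter.mp hu
    refine Finset.mem_filter.mpr ⟨hw, ?_⟩
    set W : ↥RS.pos := posRoot w hw with hW
    have hWv := posRoot_spec w hw
    by_cases hCW : C = W
    · exact ⟨W, hWv, hCW ▸ hreach⟩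
    · have hswap : RS.B w u ≠ 0 := fun h0 => hB (by rw [RS.symm]; exact h0)
      have hBCW : RS.B W.1 C.1 ≠ 0 := by
        rcases hCu with h1 | h1 <;> rcases hWv with h2 | h2 <;> rw [h1, h2] <;>
          simpa only [B_neg_left, B_neg_right, neg_neg, neg_eq_zero, neg_ne_zero]
            using hswap
      have hk : RS.B W.1 C.1 = 1 ∨ RS.B W.1 C.1 = -1 := by
        have hne1 : W.1 ≠ C.1 := fun h => hCW (Subtype.ext h).symm
        have hne2 : W.1 ≠ -C.1 := pos_ne_neg W.2 C.2
        rcases RS.cartan W.1 (root_mem W) C.1 (root_mem C) hne1 hne2 with h | h | h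
        · exact absurd h hBCW
        · exact Or.inl h
        · exact Or.inr h
      exact ⟨W, hWv, orbit_trans hreach (fiber_step hk)⟩
  have hAne : A.1 ∈ S :=
    Finset.mem_filter.mpr ⟨root_mem A, A, Or.inl rfl, orbit_refl _⟩
  rcases RS.irred S hSsub hclosed with hS | hS
  · rw [hS] at hAne
    exact absurd hAne (Finset.notMem_empty _)
  · have hBS : B.1 ∈ S := hS ▸ root_mem B
    obtain ⟨hBΦ, C, hCv, hreach⟩ := Finset.mem_filter.mp hBS
    have hCB : C = B := by
      rcases hCv with h | h
      · exact Subtype.ext h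
      · exact absurd h (pos_ne_neg C.2 B.2)
    rwa [hCB] at hreach


lemma not_span_pair (a b : Fin 3 → ℤ) :
    ¬ ((⊤ : Submodule ℤ (Fin 3 → ℤ)) ≤ Submodule.span ℤ ({a, b} : Set (Fin 3 → ℤ))) := by
  intro h
  have h1 : Module.rank ℤ (Fin 3 → ℤ) ≤
      Module.rank ℤ ↥(Submodule.span ℤ ({a, b} : Set (Fin 3 → ℤ))) := by
    rw [← rank_top ℤ (Fin 3 → ℤ)]
    exact Submodule.rank_mono h
  have h2 := rank_span_le (R := ℤ) ({a, b} : Set (Fin 3 → ℤ))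
  have h3 : Cardinal.mk ↑({a, b} : Set (Fin 3 → ℤ)) ≤ 2 := by
    refine le_trans Cardinal.mk_insert_le ?_
    rw [Cardinal.mk_singleton]
    norm_num
  have h4 := (h1.trans (h2.trans h3))
  rw [rank_fin_fun] at h4
  norm_num at h4

lemma exists_nonorth :
    ∃ A B' : ↥RS.pos, A.1 ≠ B'.1 ∧ (RS.B B'.1 A.1 = 1 ∨ RS.B B'.1 A.1 = -1) := by
  obtain ⟨α, hα⟩ := exists_pos (RS := RS)
  have hαΦ : α ∈ RS.Φ := RS.pos_subset hα
  by_cases hex : ∃ w ∈ RS.Φ, w ≠ α ∧ w ≠ -α ∧ RS.B α w ≠ 0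
  · obtain ⟨w, hw, hw1, hw2, hw3⟩ := hex
    have hWv := posRoot_spec w hw
    have hne : (⟨α, hα⟩ : ↥RS.pos).1 ≠ (posRoot w hw).1 := by
      rcases hWv with h2 | h2 <;> rw [h2]
      · exact fun h => hw1 h.symm
      · intro h
        exact hw2 (neg_eq_iff_eq_neg.mp ((show α = -w from h).symm))
    have hBW : RS.B (posRoot w hw).1 (⟨α, hα⟩ : ↥RS.pos).1 ≠ 0 := by
      have hsym : RS.B w α ≠ 0 := fun h0 => hw3 (by rw [RS.symm]; exact h0)
      rcases hWv with h2 | h2 <;> rw [h2]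
      · exact hsym
      · rw [B_neg_left]
        exact neg_ne_zero.mpr hsym
    have hne2 : (posRoot w hw).1 ≠ -(⟨α, hα⟩ : ↥RS.pos).1 :=
      pos_ne_neg (posRoot w hw).2 hα
    rcases RS.cartan (posRoot w hw).1 (root_mem _) α hαΦ (fun h => hne h.symm) hne2
      with h | h | h
    · exact absurd h hBW
    · exact ⟨⟨α, hα⟩, posRoot w hw, hne, Or.inl h⟩
    · exact ⟨⟨α, hα⟩, posRoot w hw, hne, Or.inr h⟩
  · exfalso
    push_neg at hex
    set S : Finset (Fin 3 → ℤ) := RS.Φ.filter (fun v => v = α ∨ v = -α) with hSdef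
    have hSsub : S ⊆ RS.Φ := Finset.filter_subset _ _
    have hclosed : ∀ u ∈ S, ∀ w ∈ RS.Φ, w ∉ S → RS.B u w = 0 := by
      intro u hu w hw hwS
      have hw' : w ≠ α ∧ w ≠ -α := by
        constructor <;> intro h <;> exact hwS (Finset.mem_filter.mpr ⟨hw, by rw [h]; simp⟩)
      have h0 : RS.B α w = 0 := hex w hw hw'.1 hw'.2
      obtain ⟨huΦ, hu2⟩ := Finset.mem_filter.mp hu
      rcases hu2 with rfl | rfl
      · exact h0
      · rw [B_neg_left, h0, neg_zero]
    have hαS : α ∈ S := Finset.mem_filter.mpr ⟨hαΦ, Or.inl rfl⟩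
    rcases RS.irred S hSsub hclosed with hS | hS
    · rw [hS] at hαS
      exact absurd hαS (Finset.notMem_empty _)
    · have hsub2 : (RS.Φ : Set (Fin 3 → ℤ)) ⊆ {α, -α} := by
        intro v hv
        have hv2 : v ∈ S := hS ▸ hv
        obtain ⟨_, h2⟩ := Finset.mem_filter.mp hv2
        simpa using h2
      have hle := Submodule.span_mono (R := ℤ) hsub2
      rw [RS.span_top] at hle
      exact not_span_pair α (-α) hle

lemma zsolve : ∀ x y kk z1 z2 : ZMod 3, kk * x + y ≠ 0 →
    ∃ u v : ZMod 3, 2 * u + x * v = z1 ∧ kk * u + y * v = z2 := by decide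

lemma exists_delta (A B : ↥RS.pos) (hk1 : RS.B B.1 A.1 = 1 ∨ RS.B B.1 A.1 = -1) :
    ∃ δ : ↥RS.pos,
      ((RS.B B.1 A.1 * RS.B δ.1 A.1 + RS.B δ.1 B.1 : ℤ) : ZMod 3) ≠ 0 := by
  suffices h : ∃ w ∈ RS.Φ, ((RS.B B.1 A.1 * RS.B w A.1 + RS.B w B.1 : ℤ) : ZMod 3) ≠ 0 by
    obtain ⟨w, hw, hcond⟩ := h
    refine ⟨posRoot w hw, ?_⟩
    rcases posRoot_spec w hw with h2 | h2 <;> rw [h2]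
    · exact hcond
    · intro hc
      apply hcond
      have heq : ((RS.B B.1 A.1 * RS.B (-w) A.1 + RS.B (-w) B.1 : ℤ) : ZMod 3) =
          -((RS.B B.1 A.1 * RS.B w A.1 + RS.B w B.1 : ℤ) : ZMod 3) := by
        rw [B_neg_left, B_neg_left]
        push_cast
        ring
      rw [heq, neg_eq_zero] at hc
      exact hc
  by_contra hno
  push_neg at hno
  set M := Submodule.span ℤ ({A.1, B.1} : Set (Fin 3 → ℤ)) with hMdef
  have hAM : A.1 ∈ M := Submodule.subset_span (by simp)
  have hBM : B.1 ∈ M := Submodule.subset_span (by simp)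
  have key : ∀ w ∈ RS.Φ, w ∉ M → RS.B w A.1 = 0 ∧ RS.B w B.1 = 0 := by
    intro w hw hwM
    have hwa : w ≠ A.1 := fun h => hwM (h ▸ hAM)
    have hwa' : w ≠ -A.1 := fun h => hwM (h ▸ Submodule.neg_mem _ hAM)
    have hwb : w ≠ B.1 := fun h => hwM (h ▸ hBM)
    have hwb' : w ≠ -B.1 := fun h => hwM (h ▸ Submodule.neg_mem _ hBM)
    have hca := RS.cartan w hw A.1 (root_mem A) hwa hwa'
    have hcb := RS.cartan w hw B.1 (root_mem B) hwb hwb'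
    have h0 := hno w hw
    have hdvd : (3 : ℤ) ∣ (RS.B B.1 A.1 * RS.B w A.1 + RS.B w B.1) := by
      have hdd := (ZMod.intCast_zmod_eq_zero_iff_dvd
        (RS.B B.1 A.1 * RS.B w A.1 + RS.B w B.1) 3).mp h0
      exact_mod_cast hdd
    by_cases hb0 : RS.B w A.1 = 0
    · refine ⟨hb0, ?_⟩
      rw [hb0, mul_zero, zero_add] at hdvd
      rcases hcb with h | h | h <;> omega
    · exfalso
      have heq : RS.B w B.1 = -(RS.B B.1 A.1 * RS.B w A.1) := by
        rcases hca with h | h | h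
        · exact absurd h hb0
        all_goals rcases hcb with h' | h' | h' <;> rcases hk1 with hk | hk <;>
          rw [hk, h, h'] at hdvd ⊢ <;> omega
      have hρΦ : w - RS.B A.1 w • A.1 ∈ RS.Φ := RS.reflect_mem A.1 (root_mem A) w hw
      have hsymA : RS.B A.1 w = RS.B w A.1 := RS.symm _ _
      have hρb : (w - RS.B A.1 w • A.1) ≠ B.1 := by
        intro h
        apply hwM
        have hw2 : w = RS.B A.1 w • A.1 + B.1 := by
          rw [← h]; module
        rw [hw2]
        exact Submodule.add_mem _ (Submodule.smul_mem _ _ hAM) hBM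
      have hρb' : (w - RS.B A.1 w • A.1) ≠ -B.1 := by
        intro h
        apply hwM
        have hw2 : w = RS.B A.1 w • A.1 + -B.1 := by
          rw [← h]; module
        rw [hw2]
        exact Submodule.add_mem _ (Submodule.smul_mem _ _ hAM) (Submodule.neg_mem _ hBM)
      have hcρ := RS.cartan _ hρΦ B.1 (root_mem B) hρb hρb'
      have hsymAB : RS.B A.1 B.1 = RS.B B.1 A.1 := RS.symm _ _
      rw [B_sub_left, B_smul_left, hsymA, hsymAB, heq] at hcρ
      rcases hca with h | h | h
      · exact hb0 h
      all_goals rcases hk1 with hk | hk <;> rw [hk, h] at hcρ <;>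
        rcases hcρ with h' | h' | h' <;> omega
  set S : Finset (Fin 3 → ℤ) := RS.Φ.filter (fun v => v ∈ M) with hSdef
  have hSsub : S ⊆ RS.Φ := Finset.filter_subset _ _
  have hclosed : ∀ u ∈ S, ∀ w ∈ RS.Φ, w ∉ S → RS.B u w = 0 := by
    intro u hu w hw hwS
    obtain ⟨huΦ, huM⟩ := Finset.mem_filter.mp hu
    have hwM : w ∉ M := fun h => hwS (Finset.mem_filter.mpr ⟨hw, h⟩)
    obtain ⟨hA0, hB0⟩ := key w hw hwM
    obtain ⟨p, q, hpq⟩ := Submodule.mem_span_pair.mp huM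
    have hwu : RS.B w u = 0 := by
      rw [← hpq, map_add, B_smul_right, B_smul_right, hA0, hB0]
      ring
    rw [RS.symm]
    exact hwu
  have hAS : A.1 ∈ S := Finset.mem_filter.mpr ⟨root_mem A, hAM⟩
  rcases RS.irred S hSsub hclosed with hS | hS
  · rw [hS] at hAS
    exact absurd hAS (Finset.notMem_empty _)
  · have hsub2 : (RS.Φ : Set (Fin 3 → ℤ)) ⊆ (M : Set (Fin 3 → ℤ)) := fun v hv =>
      (Finset.mem_filter.mp (hS ▸ hv)).2
    have hle : (⊤ : Submodule ℤ (Fin 3 → ℤ)) ≤ M := by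
      rw [← RS.span_top]
      exact Submodule.span_le.mpr hsub2
    exact not_span_pair A.1 B.1 hle

/-- Translation of the point set by `lam ·  B(δ, ·)`. -/
def trD (δ : ↥RS.pos) (lam : ZMod 3) (x : D0 RS) : D0 RS :=
  (x.1, x.2 + lam * ((RS.B δ.1 x.1.1 : ℤ) : ZMod 3))

lemma tr_conj (δ A : ↥RS.pos) (lam s : ZMod 3) :
    conj0 RS (conj0 RS ((A, s) : D0 RS) (δ, 0)) (δ, lam) =
      (A, s + lam * ((RS.B δ.1 A.1 : ℤ) : ZMod 3)) := by
  rw [conj0_mk]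
  have hγ : A.1 - RS.B δ.1 A.1 • δ.1 ∈ RS.Φ := gammaPhi A δ
  rw [nrm_cr_left _ _ δ lam hγ]
  apply nrm_eq_of
  left
  constructor
  · simp only [B_sub_right, B_smul_right, root_norm']
    module
  · simp only [B_sub_right, B_smul_right, root_norm']
    push_cast
    ring

lemma trD_eq (δ : ↥RS.pos) (lam : ZMod 3) (x : D0 RS) :
    conj0 RS (conj0 RS x (δ, 0)) (δ, lam) = trD δ lam x := by
  have hx : x = (x.1, x.2) := rfl
  conv_lhs => rw [hx]
  rw [tr_conj]
  rfl

lemma conjSet_tr (δ : ↥RS.pos) (lam : ZMod 3) (L : Set (D0 RS)) :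
    conjSet (conj0 RS) (δ, lam) (conjSet (conj0 RS) (δ, 0) L) = trD δ lam '' L := by
  unfold conjSet
  rw [Set.image_image]
  exact Set.image_congr' (fun x => trD_eq δ lam x)

lemma orbit_tr (δ : ↥RS.pos) (lam : ZMod 3) (L : Set (D0 RS)) :
    inSameOrbit (conj0 RS) L (trD δ lam '' L) := by
  refine ⟨[(δ, 0), (δ, lam)], ?_⟩
  show trD δ lam '' L = conjSet (conj0 RS) (δ, lam) (conjSet (conj0 RS) (δ, 0) L)
  rw [conjSet_tr]

lemma trD_conj0 (δ : ↥RS.pos) (lam : ZMod 3) (x y : D0 RS) :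
    trD δ lam (conj0 RS x y) = conj0 RS (trD δ lam x) (trD δ lam y) := by
  rw [← trD_eq δ lam x, ← trD_eq δ lam y, ← trD_eq δ lam (conj0 RS x y)]
  rw [conj0_conj x y ((δ, 0) : D0 RS),
    conj0_conj (conj0 RS x ((δ, 0) : D0 RS)) (conj0 RS y ((δ, 0) : D0 RS))
      ((δ, lam) : D0 RS)]

lemma same_pair_reach (A B : ↥RS.pos)
    (hk1 : RS.B B.1 A.1 = 1 ∨ RS.B B.1 A.1 = -1) (s1 s2 s1' s2' : ZMod 3) :
    inSameOrbit (conj0 RS)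
      {((A, s1) : D0 RS), (B, s2), conj0 RS (A, s1) (B, s2)}
      {((A, s1') : D0 RS), (B, s2'), conj0 RS (A, s1') (B, s2')} := by
  obtain ⟨δ, hδ⟩ := exists_delta A B hk1
  push_cast at hδ
  obtain ⟨u, v, hu1, hu2⟩ := zsolve _ _ _ (s1' - s1) (s2' - s2) hδ
  have hTA : ∀ s : ZMod 3, trD δ v (trD A u ((A, s) : D0 RS)) = (A, s + (s1' - s1)) := by
    intro s
    refine Prod.ext rfl ?_
    show s + u * ((RS.B A.1 A.1 : ℤ) : ZMod 3) + v * ((RS.B δ.1 A.1 : ℤ) : ZMod 3) =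
      s + (s1' - s1)
    rw [root_norm' A]
    push_cast
    linear_combination hu1
  have hTB : ∀ s : ZMod 3, trD δ v (trD A u ((B, s) : D0 RS)) = (B, s + (s2' - s2)) := by
    intro s
    refine Prod.ext rfl ?_
    show s + u * ((RS.B A.1 B.1 : ℤ) : ZMod 3) + v * ((RS.B δ.1 B.1 : ℤ) : ZMod 3) =
      s + (s2' - s2)
    rw [RS.symm A.1 B.1]
    linear_combination hu2
  have himg : trD δ v '' (trD A u ''
      {((A, s1) : D0 RS), (B, s2), conj0 RS (A, s1) (B, s2)}) =
      {((A, s1') : D0 RS), (B, s2'), conj0 RS (A, s1') (B, s2')} := by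
    erw [Set.image_insert_eq, Set.image_insert_eq, Set.image_insert_eq, Set.image_insert_eq, Set.image_singleton, Set.image_singleton]
    erw [trD_conj0 A u, trD_conj0 δ v, hTA s1, hTB s2]
    have e1 : s1 + (s1' - s1) = s1' := by ring
    have e2 : s2 + (s2' - s2) = s2' := by ring
    erw [e1, e2]
    rfl
  have h2 := orbit_tr δ v (trD A u '' {((A, s1) : D0 RS), (B, s2), conj0 RS (A, s1) (B, s2)})
  rw [himg] at h2
  exact orbit_trans (orbit_tr A u _) h2


lemma conj_step_root (A : ↥RS.pos) (s : ZMod 3) (Δ : ↥RS.pos) :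
    conj0 RS ((A, s) : D0 RS) (Δ, 0) = nrm RS (A.1 - RS.B Δ.1 A.1 • Δ.1, s) := by
  rw [conj0_mk]
  refine congrArg (nrm RS) (Prod.ext rfl ?_)
  show s - _ * 0 = s
  ring

lemma refl_posRoot (v : Fin 3 → ℤ) (hv : v ∈ RS.Φ) (x : Fin 3 → ℤ) :
    x - RS.B (posRoot v hv).1 x • (posRoot v hv).1 = x - RS.B v x • v := by
  rcases posRoot_spec v hv with h | h <;> rw [h]
  rw [B_neg_left]
  module

lemma conjSet_triple (p q t : D0 RS) :
    conjSet (conj0 RS) t ({p, q, conj0 RS p q} : Set (D0 RS)) =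
      {conj0 RS p t, conj0 RS q t, conj0 RS (conj0 RS p t) (conj0 RS q t)} := by
  unfold conjSet
  simp only [Set.image_insert_eq, Set.image_singleton]
  rw [← conj0_conj]

lemma tri_step (A Q Bp : ↥RS.pos) (s u : ZMod 3) {e e' : ℤ}
    (hQ : RS.B Q.1 A.1 = e) (hB : RS.B Bp.1 A.1 = e')
    (hee : e = 1 ∨ e = -1) (hee' : e' = 1 ∨ e' = -1)
    (hm : RS.B Bp.1 Q.1 = e * e') :
    ∃ w : ZMod 3, inSameOrbit (conj0 RS)
      {((A, s) : D0 RS), (Q, u), conj0 RS (A, s) (Q, u)}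
      {((A, s) : D0 RS), (Bp, w), conj0 RS (A, s) (Bp, w)} := by
  have hΔΦ : Q.1 - RS.B Bp.1 Q.1 • Bp.1 ∈ RS.Φ := gammaPhi Q Bp
  have hsymQ : RS.B A.1 Q.1 = e := by rw [RS.symm]; exact hQ
  have hsymB : RS.B A.1 Bp.1 = e' := by rw [RS.symm]; exact hB
  have hsymm : RS.B Q.1 Bp.1 = e * e' := by rw [RS.symm]; exact hm
  set Δ : ↥RS.pos := posRoot _ hΔΦ with hΔdef
  have hA : conj0 RS ((A, s) : D0 RS) (Δ, 0) = (A, s) := by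
    rw [conj_step_root, hΔdef, refl_posRoot]
    apply nrm_eq_of
    left
    refine ⟨?_, rfl⟩
    simp only [B_sub_left, B_smul_left, hQ, hB, hm]
    have hz : e - e * e' * e' = 0 := by
      rcases hee' with rfl | rfl <;> ring
    rw [hz]
    module
  have hQt : ∃ w : ZMod 3, conj0 RS ((Q, u) : D0 RS) (Δ, 0) = (Bp, w) := by
    rw [conj_step_root, hΔdef, refl_posRoot]
    have hfirst : Q.1 - RS.B (Q.1 - RS.B Bp.1 Q.1 • Bp.1) Q.1 •
        (Q.1 - RS.B Bp.1 Q.1 • Bp.1) = (e * e') • Bp.1 := by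
      simp only [B_sub_left, B_smul_left, root_norm', hm, hsymm]
      have h1 : (2 : ℤ) - e * e' * (e * e') = 1 := by
        rcases hee with rfl | rfl <;> rcases hee' with rfl | rfl <;> norm_num
      rw [h1]
      module
    rw [hfirst]
    have hmm : e * e' = 1 ∨ e * e' = -1 := by
      rcases hee with rfl | rfl <;> rcases hee' with rfl | rfl <;> norm_num
    rcases hmm with h | h
    · refine ⟨u, ?_⟩
      rw [h]
      apply nrm_eq_of
      left
      refine ⟨?_, rfl⟩
      module
    · refine ⟨-u, ?_⟩
      rw [h]
      apply nrm_eq_of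
      right
      refine ⟨?_, ?_⟩
      · module
      · ring
  obtain ⟨w, hQt⟩ := hQt
  refine ⟨w, ?_⟩
  have hstep := orbit_step ((Δ, 0) : D0 RS)
    ({((A, s) : D0 RS), (Q, u), conj0 RS (A, s) (Q, u)} : Set (D0 RS))
  erw [conjSet_triple, hA, hQt] at hstep
  exact hstep

lemma tri_same (A Q Bp : ↥RS.pos) (s u : ZMod 3) {e e' : ℤ}
    (hQ : RS.B Q.1 A.1 = e) (hB : RS.B Bp.1 A.1 = e')
    (hee : e = 1 ∨ e = -1) (hee' : e' = 1 ∨ e' = -1)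
    (hm : RS.B Bp.1 Q.1 = -(e * e')) :
    (conj0 RS ((A, s) : D0 RS) ((Q, u) : D0 RS)).1 = Bp := by
  have he2 : e * e = 1 := by rcases hee with rfl | rfl <;> norm_num
  have hζΦ : Q.1 - RS.B Bp.1 Q.1 • Bp.1 ∈ RS.Φ := gammaPhi Q Bp
  have hζα : RS.B (Q.1 - RS.B Bp.1 Q.1 • Bp.1) A.1 = 2 * e := by
    simp only [B_sub_left, B_smul_left, hQ, hB, hm]
    rcases hee' with rfl | rfl <;> ring
  have hζ : Q.1 - RS.B Bp.1 Q.1 • Bp.1 = e • A.1 := by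
    by_cases h1 : Q.1 - RS.B Bp.1 Q.1 • Bp.1 = A.1
    · rw [h1, root_norm'] at hζα
      rcases hee with rfl | rfl
      · rw [h1, one_smul]
      · omega
    · by_cases h2 : Q.1 - RS.B Bp.1 Q.1 • Bp.1 = -A.1
      · rw [h2, B_neg_left, root_norm'] at hζα
        rcases hee with rfl | rfl
        · omega
        · rw [h2, neg_smul, one_smul]
      · rcases RS.cartan _ hζΦ A.1 (root_mem A) h1 h2 with h | h | h <;>
          rw [h] at hζα <;> rcases hee with rfl | rfl <;> omega
  have hγBp : A.1 - RS.B Q.1 A.1 • Q.1 = e' • Bp.1 := by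
    rw [hQ]
    have h3 := congrArg (fun v : Fin 3 → ℤ => e • v) hζ
    simp only [smul_sub, smul_smul] at h3
    rw [hm, he2, one_smul] at h3
    have h4 : e * -(e * e') = -e' := by rcases hee with rfl | rfl <;> ring
    rw [h4] at h3
    rw [← h3]
    module
  rcases conj0_fst_cases A Q s u with h | h <;>
    rw [hγBp] at h <;>
    refine Subtype.ext (eq_of_pos_pm (conj0 RS ((A, s) : D0 RS) ((Q, u) : D0 RS)).1.2 Bp.2 ?_)
  · rcases hee' with rfl | rfl
    · left; rw [h, one_smul]
    · right; rw [h, neg_smul, one_smul]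
  · rcases hee' with rfl | rfl
    · right; rw [h, one_smul]
    · left; rw [h, neg_smul, one_smul, neg_neg]


lemma tri_reach (A Q Bp : ↥RS.pos) (s u s' u' : ZMod 3)
    (hQ1 : RS.B Q.1 A.1 = 1 ∨ RS.B Q.1 A.1 = -1)
    (hB1 : RS.B Bp.1 A.1 = 1 ∨ RS.B Bp.1 A.1 = -1) :
    inSameOrbit (conj0 RS)
      {((A, s) : D0 RS), (Q, u), conj0 RS (A, s) (Q, u)}
      {((A, s') : D0 RS), (Bp, u'), conj0 RS (A, s') (Bp, u')} := by
  by_cases hQB : Q = Bp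
  · subst hQB
    exact same_pair_reach A Q hQ1 s u s' u'
  have hne1 : Bp.1 ≠ Q.1 := fun h => hQB (Subtype.ext h).symm
  have hne2 : Bp.1 ≠ -Q.1 := pos_ne_neg Bp.2 Q.2
  have hmc := RS.cartan Bp.1 (root_mem Bp) Q.1 (root_mem Q) hne1 hne2
  have hsymQA : RS.B A.1 Q.1 = RS.B Q.1 A.1 := RS.symm _ _
  have hAQ : A ≠ Q := by
    intro h
    rw [h, root_norm'] at hQ1
    rcases hQ1 with h' | h' <;> omega
  have hptAQ : ((A, s) : D0 RS) ≠ (Q, u) := fun h => hAQ (congrArg Prod.fst h)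
  have hrne := third_root_ne A Q s u hQ1
  have hcA : conj0 RS ((A, s) : D0 RS) (Q, u) ≠ (A, s) :=
    fun h => hrne.1 (congrArg Prod.fst h)
  have hL1 : IsTLine (conj0 RS)
      {((A, s) : D0 RS), (Q, u), conj0 RS (A, s) (Q, u)} := tline_of_pair hptAQ hcA
  have hL1eq : ({((A, s) : D0 RS), (Q, u), conj0 RS (A, s) (Q, u)} : Set (D0 RS)) =
      {((A, s) : D0 RS), conj0 RS (A, s) (Q, u),
        conj0 RS (A, s) (conj0 RS (A, s) (Q, u))} :=
    line_two_points hL1 (Set.mem_insert _ _) (Set.mem_insert_of_mem _ (Set.mem_insert_of_mem _ rfl)) (fun h => hcA h.symm)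
  have path1 : RS.B Bp.1 Q.1 = RS.B Q.1 A.1 * RS.B Bp.1 A.1 →
      inSameOrbit (conj0 RS)
        {((A, s) : D0 RS), (Q, u), conj0 RS (A, s) (Q, u)}
        {((A, s') : D0 RS), (Bp, u'), conj0 RS (A, s') (Bp, u')} := by
    intro hmm
    obtain ⟨w2, hstep⟩ := tri_step A Q Bp s u rfl rfl hQ1 hB1 hmm
    exact orbit_trans hstep (same_pair_reach A Bp hB1 s w2 s' u')
  have path2 : RS.B Bp.1 Q.1 = -(RS.B Q.1 A.1 * RS.B Bp.1 A.1) →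
      inSameOrbit (conj0 RS)
        {((A, s) : D0 RS), (Q, u), conj0 RS (A, s) (Q, u)}
        {((A, s') : D0 RS), (Bp, u'), conj0 RS (A, s') (Bp, u')} := by
    intro hmm
    have hr := tri_same A Q Bp s u rfl rfl hQ1 hB1 hmm
    have hc2 : conj0 RS ((A, s) : D0 RS) ((Q, u) : D0 RS) =
        (Bp, (conj0 RS ((A, s) : D0 RS) ((Q, u) : D0 RS)).2) := Prod.ext hr rfl
    rw [hL1eq, hc2]
    exact same_pair_reach A Bp hB1 s _ s' u'
  rcases hmc with hm | hm | hm
  · -- orthogonal: go through the third root of the first line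
    have hcases := conj0_fst_cases A Q s u
    have he₂ : RS.B (conj0 RS ((A, s) : D0 RS) ((Q, u) : D0 RS)).1.1 A.1 = 1 ∨
        RS.B (conj0 RS ((A, s) : D0 RS) ((Q, u) : D0 RS)).1.1 A.1 = -1 := by
      rcases hcases with h | h <;> rw [h] <;>
        simp only [B_neg_left, B_sub_left, B_smul_left, root_norm', hsymQA] <;>
        rcases hQ1 with h' | h' <;> rw [h'] <;> norm_num
    have hBQ₂ : RS.B Bp.1 (conj0 RS ((A, s) : D0 RS) ((Q, u) : D0 RS)).1.1 =
        RS.B (conj0 RS ((A, s) : D0 RS) ((Q, u) : D0 RS)).1.1 A.1 * RS.B Bp.1 A.1 := by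
      rcases hcases with h | h <;> rw [h] <;>
        simp only [B_neg_left, B_neg_right, B_sub_left, B_sub_right, B_smul_left,
          B_smul_right, root_norm', hsymQA, hm] <;>
        rcases hQ1 with h' | h' <;> rw [h'] <;> ring
    obtain ⟨w2, hstep⟩ := tri_step A (conj0 RS ((A, s) : D0 RS) ((Q, u) : D0 RS)).1 Bp
      s (conj0 RS ((A, s) : D0 RS) ((Q, u) : D0 RS)).2 rfl rfl he₂ hB1 hBQ₂
    have hc2 : conj0 RS ((A, s) : D0 RS) ((Q, u) : D0 RS) =
        ((conj0 RS ((A, s) : D0 RS) ((Q, u) : D0 RS)).1,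
         (conj0 RS ((A, s) : D0 RS) ((Q, u) : D0 RS)).2) := rfl
    rw [hL1eq, hc2]
    exact orbit_trans hstep (same_pair_reach A Bp hB1 s w2 s' u')
  · rcases hQ1 with h | h <;> rcases hB1 with h' | h'
    · exact path1 (by rw [hm, h, h']; norm_num)
    · exact path2 (by rw [hm, h, h']; norm_num)
    · exact path2 (by rw [hm, h, h']; norm_num)
    · exact path1 (by rw [hm, h, h']; norm_num)
  · rcases hQ1 with h | h <;> rcases hB1 with h' | h'
    · exact path2 (by rw [hm, h, h']; norm_num)
    · exact path1 (by rw [hm, h, h']; norm_num)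
    · exact path1 (by rw [hm, h, h']; norm_num)
    · exact path2 (by rw [hm, h, h']; norm_num)


lemma pm_symm {v w : Fin 3 → ℤ} (h : RS.B v w = 1 ∨ RS.B v w = -1) :
    RS.B w v = 1 ∨ RS.B w v = -1 := by
  rw [RS.symm w v]
  exact h

lemma third_B (A B : ↥RS.pos) (s u : ZMod 3)
    (hk1 : RS.B B.1 A.1 = 1 ∨ RS.B B.1 A.1 = -1) :
    (RS.B (conj0 RS ((A, s) : D0 RS) ((B, u) : D0 RS)).1.1 A.1 = 1 ∨
      RS.B (conj0 RS ((A, s) : D0 RS) ((B, u) : D0 RS)).1.1 A.1 = -1) ∧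
    (RS.B (conj0 RS ((A, s) : D0 RS) ((B, u) : D0 RS)).1.1 B.1 = 1 ∨
      RS.B (conj0 RS ((A, s) : D0 RS) ((B, u) : D0 RS)).1.1 B.1 = -1) := by
  have hAB : RS.B A.1 B.1 = RS.B B.1 A.1 := RS.symm _ _
  rcases conj0_fst_cases A B s u with h | h <;> constructor <;> rw [h] <;>
    simp only [B_neg_left, B_sub_left, B_smul_left, root_norm', hAB] <;>
    rcases hk1 with h' | h' <;> rw [h'] <;> norm_num

lemma triangle_B {x y : D0 RS} (hxy : x.1 ≠ y.1)
    (hk2 : RS.B y.1.1 x.1.1 = 1 ∨ RS.B y.1.1 x.1.1 = -1) :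
    ∀ p ∈ ({x, y, conj0 RS x y} : Set (D0 RS)),
      ∀ q ∈ ({x, y, conj0 RS x y} : Set (D0 RS)),
      p.1 ≠ q.1 → (RS.B q.1.1 p.1.1 = 1 ∨ RS.B q.1.1 p.1.1 = -1) := by
  have f1 : RS.B y.1.1 x.1.1 = 1 ∨ RS.B y.1.1 x.1.1 = -1 := hk2
  have f2 : RS.B x.1.1 y.1.1 = 1 ∨ RS.B x.1.1 y.1.1 = -1 := pm_symm hk2
  have f3 : (RS.B (conj0 RS x y).1.1 x.1.1 = 1 ∨ RS.B (conj0 RS x y).1.1 x.1.1 = -1) ∧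
      (RS.B (conj0 RS x y).1.1 y.1.1 = 1 ∨ RS.B (conj0 RS x y).1.1 y.1.1 = -1) :=
    third_B x.1 y.1 x.2 y.2 hk2
  have f4 : RS.B x.1.1 (conj0 RS x y).1.1 = 1 ∨
      RS.B x.1.1 (conj0 RS x y).1.1 = -1 := pm_symm f3.1
  have f5 : RS.B y.1.1 (conj0 RS x y).1.1 = 1 ∨
      RS.B y.1.1 (conj0 RS x y).1.1 = -1 := pm_symm f3.2
  intro p hp q hq hpq
  simp only [Set.mem_insert_iff, Set.mem_singleton_iff] at hp hq
  rcases hp with rfl | rfl | rfl <;> rcases hq with rfl | rfl | rfl <;>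
    first
      | exact absurd rfl hpq
      | exact f1
      | exact f2
      | exact f3.1
      | exact f3.2
      | exact f4
      | exact f5

lemma foldl_tline (ts : List (D0 RS)) {L : Set (D0 RS)} (hL : IsTLine (conj0 RS) L) :
    IsTLine (conj0 RS) (ts.foldl (fun L t => conjSet (conj0 RS) t L) L) := by
  induction ts generalizing L with
  | nil => exact hL
  | cons t ts ih =>
    rw [List.foldl_cons]
    exact ih (conjSet_tline hL t)

lemma horiz_reach {L1 L2 : Set (D0 RS)} (h1 : IsTLine (conj0 RS) L1)
    (h2 : IsTLine (conj0 RS) L2) (hv1 : ¬ IsVertLine RS L1)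
    (hv2 : ¬ IsVertLine RS L2) : inSameOrbit (conj0 RS) L1 L2 := by
  rcases tline_classify h1 with hV | ⟨a, b, hab, hk1, rfl⟩
  · exact absurd hV hv1
  rcases tline_classify h2 with hV | ⟨a', b', hab', hk1', rfl⟩
  · exact absurd hV hv2
  obtain ⟨ts, hts⟩ := fiber_reach (RS := RS) a.1 a'.1
  set φ : D0 RS → D0 RS := fun x => ts.foldl (conj0 RS) x with hφ
  set N := ts.foldl (fun L t => conjSet (conj0 RS) t L) {a, b, conj0 RS a b} with hN
  have hreach1 : inSameOrbit (conj0 RS) {a, b, conj0 RS a b} N := ⟨ts, hN⟩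
  have hL1line : IsTLine (conj0 RS) ({a, b, conj0 RS a b} : Set (D0 RS)) := h1
  have hNline : IsTLine (conj0 RS) N := by
    rw [hN]
    exact foldl_tline ts hL1line
  have hmemN : φ a ∈ N := by
    rw [hN, foldl_image]
    exact ⟨a, by simp, rfl⟩
  have hrootN : (φ a).1 = a'.1 := by
    have hmem2 : φ a ∈ {p : D0 RS | p.1 = a'.1} := by
      rw [hts, foldl_image]
      exact ⟨a, rfl, rfl⟩
    exact hmem2
  have hNv : ¬ IsVertLine RS N := by
    intro hv
    apply hv1
    rw [hN] at hv
    exact (foldl_vert ts _).mp hv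
  rcases tline_classify hNline with hV | ⟨x, y, hxy, hk2, hNeq⟩
  · exact absurd hV hNv
  have hrr := third_root_ne x.1 y.1 x.2 y.2 hk2
  obtain ⟨q, hqN, hqroot⟩ : ∃ q, q ∈ N ∧ q.1 ≠ (φ a).1 := by
    have hmemN' : φ a ∈ ({x, y, conj0 RS x y} : Set (D0 RS)) := hNeq ▸ hmemN
    simp only [Set.mem_insert_iff, Set.mem_singleton_iff] at hmemN'
    rcases hmemN' with h | h | h
    · exact ⟨y, hNeq ▸ (by simp), by rw [h]; exact fun hh => hxy hh.symm⟩
    · exact ⟨x, hNeq ▸ (by simp), by rw [h]; exact hxy⟩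
    · exact ⟨x, hNeq ▸ (by simp), by rw [h]; exact fun hh => hrr.1 hh.symm⟩
  have hkq : RS.B q.1.1 (φ a).1.1 = 1 ∨ RS.B q.1.1 (φ a).1.1 = -1 := by
    have hmemN' : φ a ∈ ({x, y, conj0 RS x y} : Set (D0 RS)) := hNeq ▸ hmemN
    have hqN' : q ∈ ({x, y, conj0 RS x y} : Set (D0 RS)) := hNeq ▸ hqN
    exact triangle_B hxy hk2 (φ a) hmemN' q hqN' (fun hh => hqroot hh.symm)
  have hNpres : N = {φ a, q, conj0 RS (φ a) q} :=
    line_two_points hNline hmemN hqN (fun hh => hqroot (congrArg Prod.fst hh).symm)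
  have hφa : φ a = (a'.1, (φ a).2) := Prod.ext hrootN rfl
  have hq : q = (q.1, q.2) := rfl
  have ha' : a' = (a'.1, a'.2) := rfl
  have hb' : b' = (b'.1, b'.2) := rfl
  refine orbit_trans hreach1 ?_
  rw [hNpres, hφa, hq, ha', hb']
  have hkq' : RS.B q.1.1 a'.1.1 = 1 ∨ RS.B q.1.1 a'.1.1 = -1 := by
    rw [← hrootN]
    exact hkq
  exact tri_reach a'.1 q.1 b'.1 (φ a).2 q.2 a'.2 b'.2 hkq' hk1'


end S5

/-- For `(G,D) = 3³:S₄` (that is, `3ⁿ:W` for an irreducible simply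
laced root system of rank 3, necessarily of type `A₃`), the conjugation action of `G`
on the lines of its Fischer space has exactly two orbits: the vertical lines and the
horizontal (i.e. non-vertical) lines. -/
theorem statement5 (RS : SLRootSystem 3) :
    (∃ L : Set (D0 RS), IsTLine (conj0 RS) L ∧ IsVertLine RS L) ∧
    (∃ L : Set (D0 RS), IsTLine (conj0 RS) L ∧ ¬ IsVertLine RS L) ∧
    (∀ L₁ L₂ : Set (D0 RS), IsTLine (conj0 RS) L₁ → IsTLine (conj0 RS) L₂ →
      (inSameOrbit (conj0 RS) L₁ L₂ ↔ (IsVertLine RS L₁ ↔ IsVertLine RS L₂))) := by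
  obtain ⟨A0, hA0⟩ := S5.exists_pos (RS := RS)
  refine ⟨⟨{p : D0 RS | p.1 = ⟨A0, hA0⟩}, S5.fiber_tline _, ⟨_, rfl⟩⟩, ?_, ?_⟩
  · obtain ⟨A, Bp, hAB, hk⟩ := S5.exists_nonorth (RS := RS)
    have hABsub : A ≠ Bp := fun h => hAB (congrArg Subtype.val h)
    have hpt : ((A, 0) : D0 RS) ≠ (Bp, 0) :=
      fun h => hABsub (congrArg Prod.fst h)
    have hc : conj0 RS ((A, 0) : D0 RS) ((Bp, 0) : D0 RS) ≠ (A, 0) :=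
      fun h => (S5.third_root_ne A Bp 0 0 hk).1 (congrArg Prod.fst h)
    refine ⟨{((A, 0) : D0 RS), (Bp, 0), conj0 RS (A, 0) (Bp, 0)},
      S5.tline_of_pair hpt hc, ?_⟩
    exact S5.not_vert_of_two ((A, 0) : D0 RS) ((Bp, 0) : D0 RS) (Set.mem_insert _ _) (Set.mem_insert_of_mem _ (Set.mem_insert _ _)) hABsub
  · intro L₁ L₂ h1 h2
    constructor
    · exact fun h => S5.orbit_vert_iff h
    · intro hiff
      by_cases hv : IsVertLine RS L₁
      · have hv2 := hiff.mp hv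
        obtain ⟨A, rfl⟩ := hv
        obtain ⟨B, rfl⟩ := hv2
        exact S5.fiber_reach A B
      · have hv2 : ¬ IsVertLine RS L₂ := fun h => hv (hiff.mpr h)
        exact S5.horiz_reach h1 h2 hv hv2
end Paper
end
end

section
/- Let R be a commutative unital k-algebra and write B_R = B ⊗_k R. Suppose that for each α ∈ Φ⁺ we are given (c_α, s_α) ∈ SO₂(R), such that (c_{α+β}, s_{α+β}) = (c_α c_β − s_α s_β, s_α c_β + c_α s_β) whenever α, β, α+β ∈ Φ⁺. Then the R-linear map ρ: B_R → B_R that fixes each 1_α and acts on each Rx_α ⊕ Ry_α by x_α ↦ c_α x_α + s_α y_α and y_α ↦ c_α y_α − s_α x_α is an automorphism of the R-algebra B_R. -/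
noncomputable section
attribute [local instance] Classical.propDecidable

namespace Paper
/-! ### The algebra `B`, a twisted form of the Matsuo algebra of `3ⁿ:W` -/

/-- Index set for the basis `1_α, x_α, y_α` (coded by `0, 1, 2`) of the algebra `B`. -/
def BIdx {n : ℕ} (RS : SLRootSystem n) : Type := ↥RS.pos × Fin 3

instance {n : ℕ} (RS : SLRootSystem n) : Fintype (BIdx RS) :=
  inferInstanceAs (Fintype (↥RS.pos × Fin 3))

section Bdefs

variable {A : Type*} [CommRing A] {n : ℕ}

/-- The basis vector `1_α` of `B`. -/
def Be1 (RS : SLRootSystem n) (a : ↥RS.pos) : BIdx RS → A := Pi.single (a, (0 : Fin 3)) 1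

/-- The basis vector `x_α` of `B`. -/
def Bex (RS : SLRootSystem n) (a : ↥RS.pos) : BIdx RS → A := Pi.single (a, (1 : Fin 3)) 1

/-- The basis vector `y_α` of `B`. -/
def Bey (RS : SLRootSystem n) (a : ↥RS.pos) : BIdx RS → A := Pi.single (a, (2 : Fin 3)) 1

/-- `θ(x_α)`, where `half` plays the role of `1/2` and `s3` of `√3`. -/
def Bθx (RS : SLRootSystem n) (half s3 : A) (a : ↥RS.pos) : BIdx RS → A :=
  half • Bex RS a - (s3 * half) • Bey RS a

/-- `θ(y_α)`. -/
def Bθy (RS : SLRootSystem n) (half s3 : A) (a : ↥RS.pos) : BIdx RS → A :=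
  half • Bey RS a + (s3 * half) • Bex RS a

/-- `θ⁻¹(x_α)`. -/
def Bθix (RS : SLRootSystem n) (half s3 : A) (a : ↥RS.pos) : BIdx RS → A :=
  half • Bex RS a + (s3 * half) • Bey RS a

/-- `θ⁻¹(y_α)`. -/
def Bθiy (RS : SLRootSystem n) (half s3 : A) (a : ↥RS.pos) : BIdx RS → A :=
  half • Bey RS a - (s3 * half) • Bex RS a

/-- The positive root among `±σ_a(b)`, for positive roots `a, b`. -/
def reflPos (RS : SLRootSystem n) (a b : ↥RS.pos) : ↥RS.pos :=
  if h : (b.1 - RS.B a.1 b.1 • a.1) ∈ RS.pos then ⟨_, h⟩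
  else ⟨-(b.1 - RS.B a.1 b.1 • a.1), RS.neg_reflect_mem_pos a.2 b.2 h⟩

/-- The product of two basis elements of the algebra `B` (`half` plays the role of
`1/2` and `s3` of `√3`; in particular `9 * half = 9/2`, `3 * half * half = 3/4`). -/
def BbasisMul (RS : SLRootSystem n) (half s3 : A) (p q : BIdx RS) : BIdx RS → A :=
  if hab : p.1 = q.1 then
    -- same root: the Jordan algebra of a bilinear form on `B_α`
    (if p.2 = 0 then Pi.single q 1
     else if q.2 = 0 then Pi.single p 1
     else if p.2 = q.2 then (9 * half) • Be1 RS p.1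
     else 0)
  else if horth : RS.B p.1.1 q.1.1 = 0 then 0
  else
    if p.2 = 0 then
      (if q.2 = 0 then
        half • Be1 RS p.1 + half • Be1 RS q.1 - half • Be1 RS (reflPos RS p.1 q.1)
       else half • (Pi.single q 1 : BIdx RS → A))
    else if q.2 = 0 then half • (Pi.single p 1 : BIdx RS → A)
    else
      if hs : p.1.1 + q.1.1 ∈ RS.pos then
        -- both roots are summands of the positive root `α + β`
        (if p.2 = 1 ∧ q.2 = 1 then -((3 * half * half) • Bθy RS half s3 ⟨_, hs⟩)
         else if p.2 = 2 ∧ q.2 = 2 then (3 * half * half) • Bθy RS half s3 ⟨_, hs⟩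
         else (3 * half * half) • Bθx RS half s3 ⟨_, hs⟩)
      else if hd : p.1.1 - q.1.1 ∈ RS.pos then
        -- `p.1 = (p.1 - q.1) + q.1` is the sum root
        (if p.2 = 1 ∧ q.2 = 1 then (3 * half * half) • Bθiy RS half s3 ⟨_, hd⟩
         else if p.2 = 2 ∧ q.2 = 2 then (3 * half * half) • Bθiy RS half s3 ⟨_, hd⟩
         else if p.2 = 1 then (3 * half * half) • Bθix RS half s3 ⟨_, hd⟩
         else -((3 * half * half) • Bθix RS half s3 ⟨_, hd⟩))
      else
        -- `q.1 = (q.1 - p.1) + p.1` is the sum root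
        (if p.2 = 1 ∧ q.2 = 1 then
          (3 * half * half) • Bθiy RS half s3
            ⟨_, RS.sub_mem_pos p.1.2 q.1.2 (fun h => hab (Subtype.ext h)) horth
              hs hd⟩
         else if p.2 = 2 ∧ q.2 = 2 then
          (3 * half * half) • Bθiy RS half s3
            ⟨_, RS.sub_mem_pos p.1.2 q.1.2 (fun h => hab (Subtype.ext h)) horth
              hs hd⟩
         else if p.2 = 1 then
          -((3 * half * half) • Bθix RS half s3
            ⟨_, RS.sub_mem_pos p.1.2 q.1.2 (fun h => hab (Subtype.ext h)) horth
              hs hd⟩)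
         else (3 * half * half) • Bθix RS half s3
            ⟨_, RS.sub_mem_pos p.1.2 q.1.2 (fun h => hab (Subtype.ext h)) horth
              hs hd⟩)

/-- The multiplication of the algebra `B`. -/
def Bmul (RS : SLRootSystem n) (half s3 : A) (f g : BIdx RS → A) : BIdx RS → A :=
  ∑ p : BIdx RS, ∑ q : BIdx RS, (f p * g q) • BbasisMul RS half s3 p q

/-- The linear map on `X → A` determined by prescribing the images of the basis
vectors `Pi.single i 1`. -/
def extendBasis {X Y : Type*} [Fintype X] {A : Type*} [CommRing A] (im : X → (Y → A)) :
    (X → A) →ₗ[A] (Y → A) where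
  toFun f := ∑ i : X, f i • im i
  map_add' f g := by
    simp [add_smul, Finset.sum_add_distrib]
  map_smul' c f := by
    simp [Finset.smul_sum, smul_smul]

end Bdefs

/-- The linear map `ρ` on `B_R` fixing every `1_α` and rotating each plane
`R x_α ⊕ R y_α` by `(c_α, s_α)`. -/
def rotBasis {n : ℕ} (RS : SLRootSystem n) {A : Type*} [CommRing A]
    (cs : ↥RS.pos → A × A) : BIdx RS → (BIdx RS → A) := fun p =>
  if p.2 = 0 then (Pi.single ((p.1, (0 : Fin 3)) : BIdx RS) 1 : BIdx RS → A)
  else if p.2 = 1 then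
    (cs p.1).1 • (Pi.single ((p.1, (1 : Fin 3)) : BIdx RS) 1 : BIdx RS → A)
      + (cs p.1).2 • (Pi.single ((p.1, (2 : Fin 3)) : BIdx RS) 1 : BIdx RS → A)
  else
    (cs p.1).1 • (Pi.single ((p.1, (2 : Fin 3)) : BIdx RS) 1 : BIdx RS → A)
      - (cs p.1).2 • (Pi.single ((p.1, (1 : Fin 3)) : BIdx RS) 1 : BIdx RS → A)

section Aux
variable {n : ℕ} {A : Type*} [CommRing A]

lemma extendBasis_single {X Y : Type*} [Fintype X] (im : X → (Y → A)) (p : X) :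
    extendBasis im (Pi.single p 1) = im p := by
  simp [extendBasis, Pi.single_apply]

lemma Bmul_single (RS : SLRootSystem n) (half s3 : A) (p q : BIdx RS) :
    Bmul RS half s3 (Pi.single p 1) (Pi.single q 1) = BbasisMul RS half s3 p q := by
  simp [Bmul, Pi.single_apply]

lemma extendBasis_single_pair (RS : SLRootSystem n) {Y : Type*} (im : BIdx RS → (Y → A))
    (a : ↥RS.pos) (i : Fin 3) :
    extendBasis im (Pi.single ((a, i) : BIdx RS) 1) = im (a, i) :=
  extendBasis_single im _

lemma Bmul_single_pair (RS : SLRootSystem n) (half s3 : A) (a b : ↥RS.pos) (i j : Fin 3) :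
    Bmul RS half s3 (Pi.single ((a, i) : BIdx RS) 1) (Pi.single ((b, j) : BIdx RS) 1)
      = BbasisMul RS half s3 (a, i) (b, j) :=
  Bmul_single RS half s3 _ _

end Aux

section Aux2
variable {n : ℕ} {A : Type*} [CommRing A] (RS : SLRootSystem n) (half s3 : A)

lemma Bmul_add_left (f1 f2 g : BIdx RS → A) :
    Bmul RS half s3 (f1 + f2) g = Bmul RS half s3 f1 g + Bmul RS half s3 f2 g := by
  simp [Bmul, add_mul, add_smul, Finset.sum_add_distrib]

lemma Bmul_add_right (f g1 g2 : BIdx RS → A) :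
    Bmul RS half s3 f (g1 + g2) = Bmul RS half s3 f g1 + Bmul RS half s3 f g2 := by
  simp [Bmul, mul_add, add_smul, Finset.sum_add_distrib]

lemma Bmul_smul_left (c : A) (f g : BIdx RS → A) :
    Bmul RS half s3 (c • f) g = c • Bmul RS half s3 f g := by
  simp only [Bmul, Finset.smul_sum, Pi.smul_apply, smul_eq_mul, smul_smul, mul_assoc]

lemma Bmul_smul_right (c : A) (f g : BIdx RS → A) :
    Bmul RS half s3 f (c • g) = c • Bmul RS half s3 f g := by
  simp only [Bmul, Finset.smul_sum, Pi.smul_apply, smul_eq_mul, smul_smul,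
    mul_left_comm _ c]

lemma Bmul_sub_left (f1 f2 g : BIdx RS → A) :
    Bmul RS half s3 (f1 - f2) g = Bmul RS half s3 f1 g - Bmul RS half s3 f2 g := by
  simp [Bmul, sub_mul, sub_smul, Finset.sum_sub_distrib]

lemma Bmul_sub_right (f g1 g2 : BIdx RS → A) :
    Bmul RS half s3 f (g1 - g2) = Bmul RS half s3 f g1 - Bmul RS half s3 f g2 := by
  simp [Bmul, mul_sub, sub_smul, Finset.sum_sub_distrib]

lemma Bmul_zero_left (g : BIdx RS → A) : Bmul RS half s3 0 g = 0 := by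
  simp [Bmul]

lemma Bmul_zero_right (f : BIdx RS → A) : Bmul RS half s3 f 0 = 0 := by
  simp [Bmul]

lemma Bmul_neg_left (f g : BIdx RS → A) :
    Bmul RS half s3 (-f) g = -Bmul RS half s3 f g := by
  simp [Bmul, neg_smul, Finset.sum_neg_distrib]

lemma Bmul_neg_right (f g : BIdx RS → A) :
    Bmul RS half s3 f (-g) = -Bmul RS half s3 f g := by
  simp [Bmul, neg_smul, Finset.sum_neg_distrib]

/-- `Bmul` as a bilinear map. -/
def BmulL : (BIdx RS → A) →ₗ[A] (BIdx RS → A) →ₗ[A] (BIdx RS → A) where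
  toFun f :=
    { toFun := fun g => Bmul RS half s3 f g
      map_add' := fun g1 g2 => Bmul_add_right RS half s3 f g1 g2
      map_smul' := fun c g => Bmul_smul_right RS half s3 c f g }
  map_add' f1 f2 := LinearMap.ext fun g => Bmul_add_left RS half s3 f1 f2 g
  map_smul' c f := LinearMap.ext fun g => Bmul_smul_left RS half s3 c f g

end Aux2

section Main
variable {n : ℕ} {A : Type*} [CommRing A] (RS : SLRootSystem n) (half s3 : A)
  (cs : ↥RS.pos → A × A)

lemma fin3_cases : ∀ j : Fin 3, j = 0 ∨ j = 1 ∨ j = 2 := by decide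

lemma mult_of_key
    (key : ∀ p q : BIdx RS,
      extendBasis (rotBasis RS cs) (BbasisMul RS half s3 p q)
        = Bmul RS half s3 (rotBasis RS cs p) (rotBasis RS cs q))
    (f g : BIdx RS → A) :
    extendBasis (rotBasis RS cs) (Bmul RS half s3 f g)
      = Bmul RS half s3 (extendBasis (rotBasis RS cs) f)
          (extendBasis (rotBasis RS cs) g) := by
  have hf : extendBasis (rotBasis RS cs) f = ∑ p : BIdx RS, f p • rotBasis RS cs p := rfl
  have hg : extendBasis (rotBasis RS cs) g = ∑ q : BIdx RS, g q • rotBasis RS cs q := rfl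
  have hR : Bmul RS half s3 (extendBasis (rotBasis RS cs) f)
      (extendBasis (rotBasis RS cs) g)
      = ∑ p : BIdx RS, ∑ q : BIdx RS,
          (f p * g q) • Bmul RS half s3 (rotBasis RS cs p) (rotBasis RS cs q) := by
    rw [hf, hg]
    show BmulL RS half s3 _ _ = _
    rw [map_sum]
    simp only [LinearMap.sum_apply, map_sum, map_smul, LinearMap.smul_apply,
      Finset.smul_sum, smul_smul]
    rw [Finset.sum_comm]
    refine Finset.sum_congr rfl fun p _ => Finset.sum_congr rfl fun q _ => ?_
    rw [mul_comm]
    rfl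
  rw [hR]
  show extendBasis (rotBasis RS cs)
      (∑ p : BIdx RS, ∑ q : BIdx RS, (f p * g q) • BbasisMul RS half s3 p q) = _
  rw [map_sum]
  simp only [map_sum, map_smul, key]

lemma inv_basis_aux (cs1 cs2 : ↥RS.pos → A × A)
    (h1 : ∀ a, (cs2 a).1 = (cs1 a).1) (h2 : ∀ a, (cs2 a).2 = -(cs1 a).2)
    (hso : ∀ a : ↥RS.pos, (cs1 a).1 * (cs1 a).1 + (cs1 a).2 * (cs1 a).2 = 1)
    (p : BIdx RS) :
    extendBasis (rotBasis RS cs2) (rotBasis RS cs1 p) = Pi.single p 1 := by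
  obtain ⟨a, i⟩ := p
  rcases fin3_cases i with h | h | h <;> subst h <;>
    simp only [rotBasis, Fin.isValue,
      show ((0:Fin 3) = 0) = True by simp, show ((1:Fin 3) = 0) = False by decide,
      show ((1:Fin 3) = 1) = True by simp, show ((2:Fin 3) = 0) = False by decide,
      show ((2:Fin 3) = 1) = False by decide, ite_true, ite_false,
      map_add, map_sub, map_smul, extendBasis_single, extendBasis_single_pair, h1 a, h2 a]
  all_goals first
  | rfl
  | (match_scalars <;> first | ring1 | linear_combination hso a)

lemma bij_of_so (hso : ∀ a : ↥RS.pos, (cs a).1 * (cs a).1 + (cs a).2 * (cs a).2 = 1) :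
    Function.Bijective (extendBasis (rotBasis RS cs)) := by
  set cs' : ↥RS.pos → A × A := fun a => ((cs a).1, -(cs a).2) with hcs'
  have hso' : ∀ a : ↥RS.pos, (cs' a).1 * (cs' a).1 + (cs' a).2 * (cs' a).2 = 1 := by
    intro a; simp only [hcs']; linear_combination hso a
  have key1 : ∀ p : BIdx RS,
      extendBasis (rotBasis RS cs') (rotBasis RS cs p) = Pi.single p 1 :=
    inv_basis_aux RS cs cs' (fun a => rfl) (fun a => rfl) hso
  have key2 : ∀ p : BIdx RS,
      extendBasis (rotBasis RS cs) (rotBasis RS cs' p) = Pi.single p 1 :=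
    inv_basis_aux RS cs' cs (fun a => rfl) (fun a => by simp [hcs']) hso'
  have gen : ∀ (u v : ↥RS.pos → A × A),
      (∀ p : BIdx RS, extendBasis (rotBasis RS v) (rotBasis RS u p) = Pi.single p 1) →
      ∀ f, extendBasis (rotBasis RS v) (extendBasis (rotBasis RS u) f) = f := by
    intro u v hk f
    show extendBasis (rotBasis RS v) (∑ p : BIdx RS, f p • rotBasis RS u p) = f
    rw [map_sum]
    simp only [map_smul, hk]
    simp only [← Pi.single_smul, smul_eq_mul, mul_one]
    exact Finset.univ_sum_single f
  exact ⟨Function.LeftInverse.injective (g := extendBasis (rotBasis RS cs'))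
      (gen cs cs' key1),
    Function.RightInverse.surjective (g := extendBasis (rotBasis RS cs'))
      (gen cs' cs key2)⟩

end Main

section Key
variable {n : ℕ} {A : Type*} [CommRing A]

set_option maxHeartbeats 4000000 in
lemma key_lemma (RS : SLRootSystem n) (half s3 : A) (cs : ↥RS.pos → A × A)
    (hso : ∀ a : ↥RS.pos, (cs a).1 * (cs a).1 + (cs a).2 * (cs a).2 = 1)
    (hcompat : ∀ (a b : ↥RS.pos) (h : (a : Fin n → ℤ) + b ∈ RS.pos),
      cs ⟨(a : Fin n → ℤ) + b, h⟩
        = ((cs a).1 * (cs b).1 - (cs a).2 * (cs b).2,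
           (cs a).2 * (cs b).1 + (cs a).1 * (cs b).2))
    (p q : BIdx RS) :
    extendBasis (rotBasis RS cs) (BbasisMul RS half s3 p q)
      = Bmul RS half s3 (rotBasis RS cs p) (rotBasis RS cs q) := by
  obtain ⟨a, i⟩ := p
  obtain ⟨b, j⟩ := q
  by_cases hab : a = b
  · subst hab
    rcases fin3_cases i with hi | hi | hi <;> subst hi <;>
      rcases fin3_cases j with hj | hj | hj <;> subst hj <;>
      simp only [BbasisMul, rotBasis, Be1, Bex, Bey, Bθx, Bθy, Bθix, Bθiy,
        Bmul_add_left, Bmul_add_right, Bmul_sub_left, Bmul_sub_right,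
        Bmul_smul_left, Bmul_smul_right, Bmul_neg_left, Bmul_neg_right, Bmul_single, Bmul_single_pair,
        map_add, map_sub, map_neg, map_smul, map_zero, extendBasis_single, extendBasis_single_pair,
        smul_add, smul_sub, smul_neg, smul_zero, zero_smul, smul_smul,
        eq_self_iff_true, if_true, if_false, dite_true, dite_false,
        and_true, true_and, and_false, false_and,
        show ((0:Fin 3) = 0) = True by simp, show ((1:Fin 3) = 0) = False by decide,
        show ((1:Fin 3) = 1) = True by simp, show ((2:Fin 3) = 0) = False by decide,
        show ((2:Fin 3) = 1) = False by decide, show ((2:Fin 3) = 2) = True by simp,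
        show ((0:Fin 3) = 1) = False by decide, show ((1:Fin 3) = 2) = False by decide,
        show ((0:Fin 3) = 2) = False by decide] <;>
      (first
        | module
        | (match_scalars <;>
            (first
              | ring1
              | linear_combination (9 * half) * hso a
              | linear_combination (-(9 * half)) * hso a
              | linear_combination (18 * half) * hso a
              | linear_combination (-(18 * half)) * hso a)))
  · by_cases horth : RS.B (a : Fin n → ℤ) b = 0
    · rcases fin3_cases i with hi | hi | hi <;> subst hi <;>
        rcases fin3_cases j with hj | hj | hj <;> subst hj <;>
        simp only [BbasisMul, rotBasis, Be1, Bex, Bey, Bθx, Bθy, Bθix, Bθiy,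
        Bmul_add_left, Bmul_add_right, Bmul_sub_left, Bmul_sub_right,
        Bmul_smul_left, Bmul_smul_right, Bmul_neg_left, Bmul_neg_right, Bmul_single, Bmul_single_pair,
        map_add, map_sub, map_neg, map_smul, map_zero, extendBasis_single, extendBasis_single_pair,
        smul_add, smul_sub, smul_neg, smul_zero, zero_smul, smul_smul,
        eq_self_iff_true, if_true, if_false, dite_true, dite_false,
        and_true, true_and, and_false, false_and,
        show ((0:Fin 3) = 0) = True by simp, show ((1:Fin 3) = 0) = False by decide,
        show ((1:Fin 3) = 1) = True by simp, show ((2:Fin 3) = 0) = False by decide,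
        show ((2:Fin 3) = 1) = False by decide, show ((2:Fin 3) = 2) = True by simp,
        show ((0:Fin 3) = 1) = False by decide, show ((1:Fin 3) = 2) = False by decide,
        show ((0:Fin 3) = 2) = False by decide, hab, horth] <;>
        (first | rfl | module)
    · by_cases hs : (a : Fin n → ℤ) + b ∈ RS.pos
      · have hC := hcompat a b hs
        rcases fin3_cases i with hi | hi | hi <;> subst hi <;>
          rcases fin3_cases j with hj | hj | hj <;> subst hj <;>
          simp only [BbasisMul, rotBasis, Be1, Bex, Bey, Bθx, Bθy, Bθix, Bθiy,
        Bmul_add_left, Bmul_add_right, Bmul_sub_left, Bmul_sub_right,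
        Bmul_smul_left, Bmul_smul_right, Bmul_neg_left, Bmul_neg_right, Bmul_single, Bmul_single_pair,
        map_add, map_sub, map_neg, map_smul, map_zero, extendBasis_single, extendBasis_single_pair,
        smul_add, smul_sub, smul_neg, smul_zero, zero_smul, smul_smul,
        eq_self_iff_true, if_true, if_false, dite_true, dite_false,
        and_true, true_and, and_false, false_and,
        show ((0:Fin 3) = 0) = True by simp, show ((1:Fin 3) = 0) = False by decide,
        show ((1:Fin 3) = 1) = True by simp, show ((2:Fin 3) = 0) = False by decide,
        show ((2:Fin 3) = 1) = False by decide, show ((2:Fin 3) = 2) = True by simp,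
        show ((0:Fin 3) = 1) = False by decide, show ((1:Fin 3) = 2) = False by decide,
        show ((0:Fin 3) = 2) = False by decide, hab, horth, hs, hC] <;>
          (first | rfl | module)
      · by_cases hd : (a : Fin n → ℤ) - b ∈ RS.pos
        · have hmem : ((⟨(a : Fin n → ℤ) - b, hd⟩ : ↥RS.pos) : Fin n → ℤ) + b ∈ RS.pos := by
            show (a : Fin n → ℤ) - b + b ∈ RS.pos
            rw [sub_add_cancel]; exact a.2
          have hC := hcompat ⟨(a : Fin n → ℤ) - b, hd⟩ b hmem
          rw [show (⟨((⟨(a : Fin n → ℤ) - b, hd⟩ : ↥RS.pos) : Fin n → ℤ) + b, hmem⟩ : ↥RS.pos)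
              = a from Subtype.ext (sub_add_cancel _ _)] at hC
          have e1 : (cs a).1 = (cs ⟨(a : Fin n → ℤ) - b, hd⟩).1 * (cs b).1
              - (cs ⟨(a : Fin n → ℤ) - b, hd⟩).2 * (cs b).2 := by rw [hC]
          have e2 : (cs a).2 = (cs ⟨(a : Fin n → ℤ) - b, hd⟩).2 * (cs b).1
              + (cs ⟨(a : Fin n → ℤ) - b, hd⟩).1 * (cs b).2 := by rw [hC]
          have hc1 : (cs ⟨(a : Fin n → ℤ) - b, hd⟩).1
              = (cs a).1 * (cs b).1 + (cs a).2 * (cs b).2 := by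
            linear_combination (-(cs b).1) * e1 + (-(cs b).2) * e2
              + (-(cs ⟨(a : Fin n → ℤ) - b, hd⟩).1) * hso b
          have hc2 : (cs ⟨(a : Fin n → ℤ) - b, hd⟩).2
              = (cs a).2 * (cs b).1 - (cs a).1 * (cs b).2 := by
            linear_combination (cs b).2 * e1 - (cs b).1 * e2
              - (cs ⟨(a : Fin n → ℤ) - b, hd⟩).2 * hso b
          rcases fin3_cases i with hi | hi | hi <;> subst hi <;>
            rcases fin3_cases j with hj | hj | hj <;> subst hj <;>
            simp only [BbasisMul, rotBasis, Be1, Bex, Bey, Bθx, Bθy, Bθix, Bθiy,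
        Bmul_add_left, Bmul_add_right, Bmul_sub_left, Bmul_sub_right,
        Bmul_smul_left, Bmul_smul_right, Bmul_neg_left, Bmul_neg_right, Bmul_single, Bmul_single_pair,
        map_add, map_sub, map_neg, map_smul, map_zero, extendBasis_single, extendBasis_single_pair,
        smul_add, smul_sub, smul_neg, smul_zero, zero_smul, smul_smul,
        eq_self_iff_true, if_true, if_false, dite_true, dite_false,
        and_true, true_and, and_false, false_and,
        show ((0:Fin 3) = 0) = True by simp, show ((1:Fin 3) = 0) = False by decide,
        show ((1:Fin 3) = 1) = True by simp, show ((2:Fin 3) = 0) = False by decide,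
        show ((2:Fin 3) = 1) = False by decide, show ((2:Fin 3) = 2) = True by simp,
        show ((0:Fin 3) = 1) = False by decide, show ((1:Fin 3) = 2) = False by decide,
        show ((0:Fin 3) = 2) = False by decide, hab, horth, hs, hd, hc1, hc2] <;>
            (first | rfl | module)
        · have he : (b : Fin n → ℤ) - a ∈ RS.pos :=
            RS.sub_mem_pos a.2 b.2 (fun h => hab (Subtype.ext h)) horth hs hd
          have hmem : ((⟨(b : Fin n → ℤ) - a, he⟩ : ↥RS.pos) : Fin n → ℤ) + a ∈ RS.pos := by
            show (b : Fin n → ℤ) - a + a ∈ RS.pos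
            rw [sub_add_cancel]; exact b.2
          have hC := hcompat ⟨(b : Fin n → ℤ) - a, he⟩ a hmem
          rw [show (⟨((⟨(b : Fin n → ℤ) - a, he⟩ : ↥RS.pos) : Fin n → ℤ) + a, hmem⟩ : ↥RS.pos)
              = b from Subtype.ext (sub_add_cancel _ _)] at hC
          have e1 : (cs b).1 = (cs ⟨(b : Fin n → ℤ) - a, he⟩).1 * (cs a).1
              - (cs ⟨(b : Fin n → ℤ) - a, he⟩).2 * (cs a).2 := by rw [hC]
          have e2 : (cs b).2 = (cs ⟨(b : Fin n → ℤ) - a, he⟩).2 * (cs a).1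
              + (cs ⟨(b : Fin n → ℤ) - a, he⟩).1 * (cs a).2 := by rw [hC]
          have hc1 : (cs ⟨(b : Fin n → ℤ) - a, he⟩).1
              = (cs a).1 * (cs b).1 + (cs a).2 * (cs b).2 := by
            linear_combination (-(cs a).1) * e1 + (-(cs a).2) * e2
              + (-(cs ⟨(b : Fin n → ℤ) - a, he⟩).1) * hso a
          have hc2 : (cs ⟨(b : Fin n → ℤ) - a, he⟩).2
              = (cs a).1 * (cs b).2 - (cs a).2 * (cs b).1 := by
            linear_combination (cs a).2 * e1 - (cs a).1 * e2
              - (cs ⟨(b : Fin n → ℤ) - a, he⟩).2 * hso a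
          rcases fin3_cases i with hi | hi | hi <;> subst hi <;>
            rcases fin3_cases j with hj | hj | hj <;> subst hj <;>
            simp only [BbasisMul, rotBasis, Be1, Bex, Bey, Bθx, Bθy, Bθix, Bθiy,
        Bmul_add_left, Bmul_add_right, Bmul_sub_left, Bmul_sub_right,
        Bmul_smul_left, Bmul_smul_right, Bmul_neg_left, Bmul_neg_right, Bmul_single, Bmul_single_pair,
        map_add, map_sub, map_neg, map_smul, map_zero, extendBasis_single, extendBasis_single_pair,
        smul_add, smul_sub, smul_neg, smul_zero, zero_smul, smul_smul,
        eq_self_iff_true, if_true, if_false, dite_true, dite_false,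
        and_true, true_and, and_false, false_and,
        show ((0:Fin 3) = 0) = True by simp, show ((1:Fin 3) = 0) = False by decide,
        show ((1:Fin 3) = 1) = True by simp, show ((2:Fin 3) = 0) = False by decide,
        show ((2:Fin 3) = 1) = False by decide, show ((2:Fin 3) = 2) = True by simp,
        show ((0:Fin 3) = 1) = False by decide, show ((1:Fin 3) = 2) = False by decide,
        show ((0:Fin 3) = 2) = False by decide, hab, horth, hs, hd, hc1, hc2] <;>
            (first | rfl | module)

end Key

/-- Given a family `(c_α, s_α) ∈ SO₂(R)`, `α ∈ Φ⁺`, multiplicative on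
sums of positive roots, the induced rotation map is an automorphism of the `R`-algebra
`B_R = B ⊗_k R`. -/
theorem statement15 (k : Type*) [Field k] (hk2 : (2 : k) ≠ 0) (hk3 : (3 : k) ≠ 0)
    (s3 : k) (hs3 : s3 * s3 = 3) {n : ℕ} (RS : SLRootSystem n)
    (R : Type*) [CommRing R] [Algebra k R]
    (cs : ↥RS.pos → R × R)
    (hso : ∀ a : ↥RS.pos, (cs a).1 * (cs a).1 + (cs a).2 * (cs a).2 = 1)
    (hcompat : ∀ (a b : ↥RS.pos) (h : (a : Fin n → ℤ) + b ∈ RS.pos),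
      cs ⟨(a : Fin n → ℤ) + b, h⟩
        = ((cs a).1 * (cs b).1 - (cs a).2 * (cs b).2,
           (cs a).2 * (cs b).1 + (cs a).1 * (cs b).2)) :
    Function.Bijective (extendBasis (rotBasis RS cs)) ∧
    ∀ f g : BIdx RS → R,
      extendBasis (rotBasis RS cs)
          (Bmul RS (algebraMap k R ((1 : k) / 2)) (algebraMap k R s3) f g)
        = Bmul RS (algebraMap k R ((1 : k) / 2)) (algebraMap k R s3)
            (extendBasis (rotBasis RS cs) f) (extendBasis (rotBasis RS cs) g) := by
  constructor
  · exact bij_of_so RS cs hso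
  · intro f g
    exact mult_of_key RS (algebraMap k R ((1 : k) / 2)) (algebraMap k R s3) cs
      (key_lemma RS (algebraMap k R ((1 : k) / 2)) (algebraMap k R s3) cs hso hcompat) f g
end Paper
end
end
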